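/- arXiv:2401.13384 — 9 statements merged into one kernel-verified Lean document; each statement's English description precedes it below -/
import Mathlib

section
/- Let H > 1 and let x : [1,H] → ℝ be non-decreasing and p : [1,H] → ℝ be Lebesgue integrable on [1,H]. Then the following two conditions are equivalent: (i) for all s, t with 1 ≤ s ≤ t ≤ H, p(t) − p(s) = t·x(t) − s·x(s) − ∫_s^t x(z) dz; (ii) for all s, t with 1 ≤ s ≤ t ≤ H, x(t) = p(t)/t + ∫_s^t p(z)/z² dz + x(s) − p(s)/s. -/
/-!
Put `ψ z = z * x z - p z` and `φ z = x z - p z / z = ψ z / z`. Condition (i) says that `ψ` is an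
indefinite integral of `x` on `[s, H]`, condition (ii) that `φ` is an indefinite integral of
`p z / z ^ 2`. Indefinite integrals are absolutely continuous, so the product rule holds almost
everywhere and integrates back: `(ψ * z⁻¹)' = x / z - ψ / z ^ 2 = p / z ^ 2` turns (i) into (ii),
and `(φ * z)' = p / z + φ = x` turns (ii) into (i).
-/

open MeasureTheory intervalIntegral

open Set

theorem integral_mul_add_mul_deriv_of_eq_primitive {u f g : ℝ → ℝ} {a b : ℝ}
    (hf : IntervalIntegrable f volume a b) (hu : ∀ z ∈ uIcc a b, u z = u a + ∫ t in a..z, f t)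
    (hg : AbsolutelyContinuousOnInterval g a b) :
    ∫ z in a..b, f z * g z + u z * deriv g z = u b * g b - u a * g a := by
  set U : ℝ → ℝ := fun z => u a + ∫ t in a..z, f t
  have hU : AbsolutelyContinuousOnInterval U a b :=
    (LipschitzWith.const (u a)).lipschitzOnWith.absolutelyContinuousOnInterval.add
      (hf.absolutelyContinuousOnInterval_intervalIntegral left_mem_uIcc)
  have hUb : U b = u b := (hu b right_mem_uIcc).symm
  have hUa : U a = u a := by simp [U]
  rw [← hUb, ← hUa, ← hU.integral_deriv_mul_eq_sub hg]
  refine integral_congr_ae ?_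
  filter_upwards [hf.ae_hasDerivAt_integral] with z hz hzab
  have hz' : z ∈ uIcc a b := uIoc_subset_uIcc hzab
  rw [((hz hz' a left_mem_uIcc).const_add (u a)).deriv, hu z hz']

theorem alternative_of_payment_identity {x p : ℝ → ℝ} {s t : ℝ} (hs : 0 < s) (hst : s ≤ t)
    (hx : IntervalIntegrable x volume s t)
    (h : ∀ z ∈ Icc s t, p z - p s = z * x z - s * x s - ∫ u in s..z, x u) :
    x t = p t / t + (∫ z in s..t, p z / z ^ 2) + x s - p s / s := by
  rw [← uIcc_of_le hst] at h
  have hpos : ∀ z ∈ uIcc s t, 0 < z := fun z hz => hs.trans_le (uIcc_of_le hst ▸ hz).1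
  have hψ : ∀ z ∈ uIcc s t, z * x z - p z = (s * x s - p s) + ∫ u in s..z, x u := fun z hz => by
    linarith [h z hz]
  have hinv : AbsolutelyContinuousOnInterval (fun z : ℝ => z⁻¹) s t :=
    (contDiffOn_inv ℝ).mono (fun z hz => (hpos z hz).ne') |>.absolutelyContinuousOnInterval
  have key := integral_mul_add_mul_deriv_of_eq_primitive hx hψ hinv
  have hint : EqOn (fun z => x z * z⁻¹ + (z * x z - p z) * deriv (fun z : ℝ => z⁻¹) z)
      (fun z => p z / z ^ 2) (uIcc s t) := fun z hz => by
    have hz' := (hpos z hz).ne'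
    simp only [deriv_inv]
    field_simp
    ring
  rw [integral_congr hint] at key
  have ht := (hpos t right_mem_uIcc).ne'
  rw [key]
  field_simp
  ring

theorem payment_identity_of_alternative {x p : ℝ → ℝ} {s t : ℝ} (hs : 0 < s) (hst : s ≤ t)
    (hp : IntervalIntegrable p volume s t)
    (h : ∀ z ∈ Icc s t, x z = p z / z + (∫ u in s..z, p u / u ^ 2) + x s - p s / s) :
    p t - p s = t * x t - s * x s - ∫ z in s..t, x z := by
  rw [← uIcc_of_le hst] at h
  have hpos : ∀ z ∈ uIcc s t, 0 < z := fun z hz => hs.trans_le (uIcc_of_le hst ▸ hz).1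
  have hφ : ∀ z ∈ uIcc s t, x z - p z / z = (x s - p s / s) + ∫ u in s..z, p u / u ^ 2 :=
    fun z hz => by linarith [h z hz]
  have hpw : IntervalIntegrable (fun u => p u / u ^ 2) volume s t := by
    simp_rw [div_eq_mul_inv]
    exact hp.mul_continuousOn <| (continuousOn_pow 2).inv₀ fun z hz => (pow_pos (hpos z hz) 2).ne'
  have key := integral_mul_add_mul_deriv_of_eq_primitive hpw hφ
    (LipschitzWith.id.lipschitzOnWith.absolutelyContinuousOnInterval)
  have hint : EqOn (fun z => p z / z ^ 2 * id z + (x z - p z / z) * deriv id z) x (uIcc s t) :=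
    fun z hz => by
      have hz' := (hpos z hz).ne'
      simp only [deriv_id, id]
      field_simp
      ring
  rw [integral_congr hint, id_eq, id_eq] at key
  have ht := (hpos t right_mem_uIcc).ne'
  have hs' := hs.ne'
  rw [key]
  field_simp
  ring

theorem myerson_alternative_general (H : ℝ) (x p : ℝ → ℝ)
    (hx : MonotoneOn x (Set.Icc 1 H))
    (hp : IntegrableOn p (Set.Icc 1 H)) :
    (∀ s t : ℝ, 1 ≤ s → s ≤ t → t ≤ H →
      p t - p s = t * x t - s * x s - ∫ z in s..t, x z) ↔
    (∀ s t : ℝ, 1 ≤ s → s ≤ t → t ≤ H →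
      x t = p t / t + (∫ z in s..t, p z / z ^ 2) + x s - p s / s) := by
  constructor
  · intro payment s t hs hst htH
    have hx' : IntervalIntegrable x volume s t :=
      (hx.mono (uIcc_of_le hst ▸ Icc_subset_Icc hs htH)).intervalIntegrable
    exact alternative_of_payment_identity (by linarith) hst hx'
      fun z hz => payment s z hs hz.1 (hz.2.trans htH)
  · intro alternative s t hs hst htH
    have hp' : IntervalIntegrable p volume s t :=
      (intervalIntegrable_iff_integrableOn_Icc_of_le hst).2 (hp.mono_set (Icc_subset_Icc hs htH))
    exact payment_identity_of_alternative (by linarith) hst hp'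
      fun z hz => alternative s z hs hz.1 (hz.2.trans htH)

/-- Equivalence of Myerson's payment identity and its alternative form
(Lemma 2 of the paper), for a non-decreasing allocation rule `x` and an
integrable payment rule `p` on `[1, H]`. -/
theorem myerson_alternative (H : ℝ) (hH : 1 < H) (x p : ℝ → ℝ)
    (hx : MonotoneOn x (Set.Icc 1 H))
    (hp : IntegrableOn p (Set.Icc 1 H)) :
    (∀ s t : ℝ, 1 ≤ s → s ≤ t → t ≤ H →
      p t - p s = t * x t - s * x s - ∫ z in s..t, x z) ↔
    (∀ s t : ℝ, 1 ≤ s → s ≤ t → t ≤ H →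
      x t = p t / t + (∫ z in s..t, p z / z ^ 2) + x s - p s / s) :=
  myerson_alternative_general H x p hx hp
end

section
/- Let H > 1, let γ, ρ be real numbers with 0 ≤ ρ ≤ γ ≤ 1 and γ > 0, and let û ∈ [1,H]. There exists a feasible DSIC single-bidder auction (x,p) on [1,H] that is γ-consistent and ρ-robust with respect to the prediction û if and only if γ + ρ·ln(max{û, H·ρ/γ}) ≤ 1. -/
/-!
With `F t = ∫ z in 1..t, x z`, Myerson's identity and `p 1 ≤ x 1` give `p t ≤ t * x t - F t`,
while `(F t / t)' = (t * x t - F t) / t ^ 2`. Robustness therefore makes `F t / t` grow at least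
like `ρ * log t`, and consistency forces `x t ≥ γ + F uhat / uhat` from `uhat` on, up to
`t = γ * uhat / ρ` where robustness becomes the binding constraint again. As
`x H ≥ ρ + F H / H`, this gives `x H ≥ γ + ρ * log (max uhat (H * ρ / γ))`. Conversely, the
allocation whose payment is exactly `ρ * t` below `uhat` and `max (γ * uhat) (ρ * t)` from `uhat`
on meets all these bounds with equality.
-/

open MeasureTheory intervalIntegral
open Set Real

theorem MonotoneOn.hasDerivAt_integral {f : ℝ → ℝ} {a b u : ℝ} (hf : MonotoneOn f (Icc a b))
    (hu : u ∈ Ioo a b) (hcont : ContinuousWithinAt f (Icc a b) u) :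
    HasDerivAt (fun v => ∫ z in a..v, f z) (f u) u := by
  have hnhds : Icc a b ∈ nhds u := Icc_mem_nhds hu.1 hu.2
  refine integral_hasDerivAt_right ?_ ⟨Icc a b, hnhds, ?_⟩ (hcont.continuousAt hnhds)
  · exact (hf.mono (uIcc_subset_Icc (left_mem_Icc.2 (hu.1.trans hu.2).le)
      (Ioo_subset_Icc_self hu))).intervalIntegrable
  · exact (hf.integrableOn_isCompact isCompact_Icc).aestronglyMeasurable

theorem MonotoneOn.integral_div_add_mul_log_le {f : ℝ → ℝ} {a s t ρ : ℝ}
    (hf : MonotoneOn f (Icc a t)) (has : a ≤ s) (hs : 0 < s) (hst : s ≤ t)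
    (h : ∀ u ∈ Icc s t, ρ * u ≤ u * f u - ∫ z in a..u, f z) :
    (∫ z in a..s, f z) / s + ρ * log (t / s) ≤ (∫ z in a..t, f z) / t := by
  set F := fun v => ∫ z in a..v, f z
  have hst' : Icc s t ⊆ Icc a t := Icc_subset_Icc_left has
  have hne : ∀ u ∈ Icc s t, u ≠ 0 := fun u hu => (hs.trans_le hu.1).ne'
  have hF : ContinuousOn F (Icc s t) :=
    (continuousOn_primitive_interval'
      (hf.mono (uIcc_of_le (has.trans hst)).subset).intervalIntegrable left_mem_uIcc).mono
      (hst'.trans Icc_subset_uIcc)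
  -- `F` is differentiable wherever `f` is continuous, that is, off a countable set.
  have hderiv : ∀ u ∈ Ioo s t \ {u ∈ Icc a t | ¬ContinuousWithinAt f (Icc a t) u},
      HasDerivAt (fun v => F v / v - ρ * log v) (f u / u - F u / u ^ 2 - ρ / u) u := by
    rintro u ⟨hu, hcu⟩
    have hu0 : u ≠ 0 := (hs.trans hu.1).ne'
    have hFu : HasDerivAt F (f u) u :=
      hf.hasDerivAt_integral ⟨has.trans_lt hu.1, hu.2⟩
        (by_contra fun hc => hcu ⟨hst' (Ioo_subset_Icc_self hu), hc⟩)
    refine ((hFu.div (hasDerivAt_id' u) hu0).sub ((hasDerivAt_log hu0).const_mul ρ)).congr_deriv ?_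
    field_simp
  have hint : IntervalIntegrable (fun u => f u / u - F u / u ^ 2 - ρ / u) volume s t := by
    rw [← uIcc_of_le hst] at hst' hF hne
    refine ((((hf.mono hst').intervalIntegrable.mul_continuousOn
      (continuousOn_inv₀.mono hne)).sub ?_).sub ?_)
    · exact (hF.div (continuousOn_pow 2) fun u hu => pow_ne_zero 2 (hne u hu)).intervalIntegrable
    · exact (continuousOn_const.div continuousOn_id hne).intervalIntegrable
  have hnonneg : 0 ≤ ∫ u in s..t, (f u / u - F u / u ^ 2 - ρ / u) := by
    refine integral_nonneg hst fun u hu => ?_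
    have hu0 : 0 < u := hs.trans_le hu.1
    have : f u / u - F u / u ^ 2 - ρ / u = (u * f u - F u - ρ * u) / u ^ 2 := by
      field_simp
    rw [this]
    exact div_nonneg (by linarith [h u hu]) (by positivity)
  rw [integral_eq_of_hasDerivAt_off_countable_of_le (fun v => F v / v - ρ * log v) _ hst
    hf.countable_not_continuousWithinAt
    ((hF.div continuousOn_id hne).sub (continuousOn_const.mul (continuousOn_log.mono hne)))
    hderiv hint] at hnonneg
  rw [log_div (hne t (right_mem_Icc.2 hst)) hs.ne']
  linarith

theorem MonotoneOn.integral_div_add_mul_le {f : ℝ → ℝ} {a u c κ : ℝ}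
    (hf : MonotoneOn f (Icc a c)) (hau : a ≤ u) (hu : 0 < u) (huc : u ≤ c)
    (h : κ + (∫ z in a..u, f z) / u ≤ f u) :
    (∫ z in a..u, f z) / u + κ * (1 - u / c) ≤ (∫ z in a..c, f z) / c := by
  have hint : ∀ v ∈ Icc a c, ∀ w ∈ Icc a c, IntervalIntegrable f volume v w :=
    fun v hv w hw => (hf.mono (uIcc_subset_Icc hv hw)).intervalIntegrable
  have ha : a ∈ Icc a c := ⟨le_rfl, hau.trans huc⟩
  have hu' : u ∈ Icc a c := ⟨hau, huc⟩
  have hc : c ∈ Icc a c := ⟨hau.trans huc, le_rfl⟩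
  have hstep : (c - u) * f u ≤ (∫ z in a..c, f z) - ∫ z in a..u, f z := by
    rw [integral_interval_sub_left (hint a ha c hc) (hint a ha u hu')]
    simpa [mul_comm] using integral_mono_on huc intervalIntegrable_const (hint u hu' c hc)
      fun z hz => hf hu' ⟨hau.trans hz.1, hz.2⟩ hz.1
  have hc0 : 0 < c := hu.trans_le huc
  have hmul := mul_le_mul_of_nonneg_left h (sub_nonneg.2 huc)
  have hFu : u * ((∫ z in a..u, f z) / u) = ∫ z in a..u, f z := mul_div_cancel₀ _ hu.ne'
  rw [le_div_iff₀ hc0, add_mul, mul_assoc, sub_mul, div_mul_cancel₀ _ hc0.ne', one_mul]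
  nlinarith

-- Any payment rule satisfying Myerson's identity and `p 1 ≤ x 1` lies below this one.
noncomputable def myersonPayment (x : ℝ → ℝ) (t : ℝ) : ℝ :=
  t * x t - ∫ z in (1 : ℝ)..t, x z

section MyersonPayment

variable {x : ℝ → ℝ} {s t : ℝ}

theorem myersonPayment_sub_myersonPayment (hs : IntervalIntegrable x volume 1 s)
    (ht : IntervalIntegrable x volume 1 t) :
    myersonPayment x t - myersonPayment x s = t * x t - s * x s - ∫ z in s..t, x z := by
  rw [myersonPayment, myersonPayment, ← integral_interval_sub_left ht hs]
  ring

theorem le_myersonPayment {p : ℝ → ℝ} (hp1 : p 1 ≤ x 1)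
    (hid : p t - p 1 = t * x t - 1 * x 1 - ∫ z in (1 : ℝ)..t, x z) : p t ≤ myersonPayment x t := by
  rw [myersonPayment]
  linarith

theorem mul_le_myersonPayment_iff {κ : ℝ} (ht : 0 < t) :
    κ * t ≤ myersonPayment x t ↔ κ + (∫ z in (1 : ℝ)..t, x z) / t ≤ x t := by
  have h : myersonPayment x t - κ * t = t * (x t - (κ + (∫ z in (1 : ℝ)..t, x z) / t)) := by
    rw [myersonPayment]
    field_simp
    ring
  rw [← sub_nonneg, h, mul_nonneg_iff_of_pos_left ht, sub_nonneg]

end MyersonPayment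

theorem add_mul_log_max_le_of_le_myersonPayment {x : ℝ → ℝ} {H γ ρ uhat : ℝ}
    (hx : MonotoneOn x (Icc 1 H)) (hxH : x H ≤ 1) (hργ : ρ ≤ γ) (hγ : 0 < γ)
    (hu : uhat ∈ Icc 1 H) (hrob : ∀ t ∈ Icc 1 H, ρ * t ≤ myersonPayment x t)
    (hcons : γ * uhat ≤ myersonPayment x uhat) :
    γ + ρ * log (max uhat (H * ρ / γ)) ≤ 1 := by
  obtain ⟨hu1, huH⟩ := hu
  set F := fun t => ∫ z in (1 : ℝ)..t, x z
  have hu0 : 0 < uhat := one_pos.trans_le hu1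
  have hH : H ∈ Icc 1 H := ⟨hu1.trans huH, le_rfl⟩
  have hgronwall : ∀ {s t}, 1 ≤ s → s ≤ t → t ≤ H → F s / s + ρ * log (t / s) ≤ F t / t :=
    fun hs hst htH => (hx.mono (Icc_subset_Icc_right htH)).integral_div_add_mul_log_le hs
      (one_pos.trans_le hs) hst fun u hu => hrob u ⟨hs.trans hu.1, hu.2.trans htH⟩
  have hFu : ρ * log uhat ≤ F uhat / uhat := by simpa [F] using hgronwall le_rfl hu1 huH
  have hxu : γ + F uhat / uhat ≤ x uhat := (mul_le_myersonPayment_iff hu0).1 hcons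
  have hxuH : x uhat ≤ x H := hx ⟨hu1, huH⟩ hH huH
  rcases le_total (H * ρ / γ) uhat with hM | hM
  · rw [max_eq_left hM]
    linarith
  rw [max_eq_right hM]
  have hρ : 0 < ρ := by
    have := hu0.trans_le hM
    rw [lt_div_iff₀ hγ, zero_mul] at this
    exact pos_of_mul_pos_right this (zero_le_one.trans hH.1)
  -- the point where the robustness bound `ρ * t` overtakes the consistency bound `γ * uhat`
  set c := γ * uhat / ρ with hc
  have huc : uhat ≤ c := by rw [le_div_iff₀ hρ]; nlinarith
  have hcH : c ≤ H := by rw [div_le_iff₀ hρ]; rw [le_div_iff₀ hγ] at hM; linarith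
  have hc0 : 0 < c := hu0.trans_le huc
  have hFc : F uhat / uhat + γ * (1 - uhat / c) ≤ F c / c :=
    (hx.mono (Icc_subset_Icc_right hcH)).integral_div_add_mul_le hu1 hu0 huc hxu
  have hγc : γ * (1 - uhat / c) = γ - ρ := by
    rw [hc]
    field_simp
  have hFH := hgronwall (hu1.trans huc) hcH le_rfl
  have hxH' : ρ + F H / H ≤ x H :=
    (mul_le_myersonPayment_iff (one_pos.trans_le hH.1)).1 (hrob H hH)
  have hlog : log (H * ρ / γ) = log uhat + log (H / c) := by
    rw [← log_mul hu0.ne' (div_pos (one_pos.trans_le hH.1) hc0).ne']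
    congr 1
    rw [hc]
    field_simp
  rw [hlog]
  linarith

noncomputable def optimalAllocation (γ ρ uhat t : ℝ) : ℝ :=
  if uhat ≤ t then γ + ρ * log (max uhat (ρ * t / γ)) else ρ * (1 + log t)

noncomputable def optimalPayment (γ ρ uhat t : ℝ) : ℝ :=
  if uhat ≤ t then max (γ * uhat) (ρ * t) else ρ * t

section OptimalAuction

variable {γ ρ uhat : ℝ}

theorem monotoneOn_optimalAllocation (hρ : 0 ≤ ρ) (hργ : ρ ≤ γ) (hγ : 0 < γ) (hu : 0 < uhat) :
    MonotoneOn (optimalAllocation γ ρ uhat) (Ioi 0) := by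
  intro s hs t ht hst
  have hlog_max : ∀ v, log uhat ≤ log (max uhat (ρ * v / γ)) := fun v =>
    log_le_log hu (le_max_left _ _)
  unfold optimalAllocation
  split_ifs with hus hut hut
  · gcongr
  · exact absurd (hus.trans hst) hut
  · have := log_le_log hs (not_le.1 hus).le
    have := hlog_max t
    nlinarith
  · have := log_le_log hs hst
    nlinarith

theorem optimalAllocation_nonneg (hρ : 0 ≤ ρ) (hγ : 0 ≤ γ) (hu : 1 ≤ uhat) {t : ℝ} (ht : 1 ≤ t) :
    0 ≤ optimalAllocation γ ρ uhat t := by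
  unfold optimalAllocation
  split_ifs
  · have := log_nonneg (hu.trans (le_max_left uhat (ρ * t / γ)))
    positivity
  · have := log_nonneg ht
    positivity

theorem mul_le_optimalPayment (t : ℝ) : ρ * t ≤ optimalPayment γ ρ uhat t := by
  unfold optimalPayment
  split_ifs
  exacts [le_max_right _ _, le_rfl]

theorem mul_le_optimalPayment_self : γ * uhat ≤ optimalPayment γ ρ uhat uhat := by
  simp [optimalPayment]

theorem continuous_mul_optimalAllocation_sub_optimalPayment (hργ : ρ ≤ γ) (hγ : 0 < γ)
    (hu : 0 < uhat) :
    Continuous fun t => t * optimalAllocation γ ρ uhat t - optimalPayment γ ρ uhat t := by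
  have h : (fun t => t * optimalAllocation γ ρ uhat t - optimalPayment γ ρ uhat t) = fun t =>
      if uhat ≤ t then t * (γ + ρ * log (max uhat (ρ * t / γ))) - max (γ * uhat) (ρ * t)
      else ρ * (t * log t) := by
    funext t
    unfold optimalAllocation optimalPayment
    split_ifs <;> ring
  rw [h]
  refine continuous_if_le continuous_const continuous_id (Continuous.continuousOn ?_)
    (continuous_mul_log.const_mul ρ).continuousOn fun t (ht : uhat = t) => ?_
  · have : ∀ t, max uhat (ρ * t / γ) ≠ 0 := fun t => (lt_max_of_lt_left hu).ne'
    fun_prop (disch := exact this)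
  · subst ht
    have h1 : ρ * uhat / γ ≤ uhat := by rw [div_le_iff₀ hγ]; nlinarith
    have h2 : ρ * uhat ≤ γ * uhat := by nlinarith
    rw [max_eq_left h1, max_eq_left h2]
    ring

theorem hasDerivAt_mul_optimalAllocation_sub_optimalPayment (hγ : 0 < γ) (hu : 0 < uhat) {t : ℝ}
    (ht : 0 < t) (htu : t ≠ uhat) (hρt : ρ * t ≠ γ * uhat) :
    HasDerivAt (fun t => t * optimalAllocation γ ρ uhat t - optimalPayment γ ρ uhat t)
      (optimalAllocation γ ρ uhat t) t := by
  rcases htu.lt_or_gt with htu | htu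
  · have hA : (fun v => ρ * (v * log v)) =ᶠ[nhds t]
        fun v => v * optimalAllocation γ ρ uhat v - optimalPayment γ ρ uhat v := by
      filter_upwards [Iio_mem_nhds htu] with v (hv : v < uhat)
      simp only [optimalAllocation, optimalPayment, if_neg (not_le.2 hv)]
      ring
    refine (((hasDerivAt_mul_log ht.ne').const_mul ρ).congr_of_eventuallyEq hA.symm).congr_deriv ?_
    simp only [optimalAllocation, if_neg (not_le.2 htu)]
    ring
  have hρt_tendsto : Filter.Tendsto (fun v => ρ * v) (nhds t) (nhds (ρ * t)) :=
    (continuous_const_mul ρ).tendsto t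
  rcases hρt.lt_or_gt with hρt | hρt
  · have hmax : ∀ v, ρ * v < γ * uhat → max uhat (ρ * v / γ) = uhat := fun v hv =>
      max_eq_left ((div_le_iff₀ hγ).2 (by linarith))
    have hA : (fun v => v * (γ + ρ * log uhat) - γ * uhat) =ᶠ[nhds t]
        fun v => v * optimalAllocation γ ρ uhat v - optimalPayment γ ρ uhat v := by
      filter_upwards [Ioi_mem_nhds htu, hρt_tendsto.eventually_lt tendsto_const_nhds hρt]
        with v (hvu : uhat < v) hv
      simp only [optimalAllocation, optimalPayment, if_pos hvu.le, hmax v hv,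
        max_eq_left hv.le]
    have hd : HasDerivAt (fun v => v * (γ + ρ * log uhat) - γ * uhat) (γ + ρ * log uhat) t := by
      simpa using ((hasDerivAt_id' t).mul_const (γ + ρ * log uhat)).sub_const (γ * uhat)
    refine (hd.congr_of_eventuallyEq hA.symm).congr_deriv ?_
    simp only [optimalAllocation, if_pos htu.le, hmax t hρt]
  · have hρ : 0 < ρ := pos_of_mul_pos_left ((mul_pos hγ hu).trans hρt) ht.le
    have hmax : ∀ v, γ * uhat < ρ * v → max uhat (ρ * v / γ) = ρ * v / γ := fun v hv =>
      max_eq_right ((le_div_iff₀ hγ).2 (by linarith))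
    have hA : (fun v => v * (γ + ρ * log (ρ * v / γ)) - ρ * v) =ᶠ[nhds t]
        fun v => v * optimalAllocation γ ρ uhat v - optimalPayment γ ρ uhat v := by
      filter_upwards [Ioi_mem_nhds htu, tendsto_const_nhds.eventually_lt hρt_tendsto hρt]
        with v (hvu : uhat < v) hv
      simp only [optimalAllocation, optimalPayment, if_pos hvu.le, hmax v hv,
        max_eq_right hv.le]
    have hlog : HasDerivAt (fun v => log (ρ * v / γ)) (1 / t) t := by
      have hlin : HasDerivAt (fun v => ρ * v / γ) (ρ / γ) t := by
        simpa using ((hasDerivAt_id' t).const_mul ρ).div_const γ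
      refine (hlin.log (by positivity)).congr_deriv ?_
      field_simp
    have hd : HasDerivAt (fun v => v * (γ + ρ * log (ρ * v / γ)) - ρ * v)
        (γ + ρ * log (ρ * t / γ)) t := by
      refine (((hasDerivAt_id' t).mul ((hlog.const_mul ρ).const_add γ)).sub
        ((hasDerivAt_id' t).const_mul ρ)).congr_deriv ?_
      field_simp
      ring
    refine (hd.congr_of_eventuallyEq hA.symm).congr_deriv ?_
    simp only [optimalAllocation, if_pos htu.le, hmax t hρt]

theorem myersonPayment_optimalAllocation (hρ : 0 ≤ ρ) (hργ : ρ ≤ γ) (hγ : 0 < γ)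
    (hu : 1 ≤ uhat) {t : ℝ} (ht : 1 ≤ t) :
    myersonPayment (optimalAllocation γ ρ uhat) t = optimalPayment γ ρ uhat t := by
  have hu0 : 0 < uhat := one_pos.trans_le hu
  have hexc : ({uhat, γ * uhat / ρ} : Set ℝ).Countable := (toFinite _).countable
  have hderiv : ∀ v ∈ Ioo 1 t \ {uhat, γ * uhat / ρ}, HasDerivAt
      (fun t => t * optimalAllocation γ ρ uhat t - optimalPayment γ ρ uhat t)
      (optimalAllocation γ ρ uhat v) v := by
    rintro v ⟨hv, hvexc⟩
    simp only [mem_insert_iff, mem_singleton_iff, not_or] at hvexc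
    refine hasDerivAt_mul_optimalAllocation_sub_optimalPayment hγ hu0 (one_pos.trans hv.1)
      hvexc.1 fun hρv => hvexc.2 ?_
    have hρ0 : ρ ≠ 0 := by rintro rfl; nlinarith
    rw [eq_div_iff hρ0]
    linarith
  have hint : IntervalIntegrable (optimalAllocation γ ρ uhat) volume 1 t :=
    ((monotoneOn_optimalAllocation hρ hργ hγ hu0).mono fun v hv =>
      one_pos.trans_le ((uIcc_of_le ht).subset hv).1).intervalIntegrable
  have hone : optimalPayment γ ρ uhat 1 = optimalAllocation γ ρ uhat 1 := by
    unfold optimalAllocation optimalPayment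
    split_ifs with h
    · obtain rfl : uhat = 1 := le_antisymm h hu
      rw [max_eq_left ((div_le_one hγ).2 (by linarith)), max_eq_left (by linarith)]
      simp
    · simp
  rw [myersonPayment, integral_eq_of_hasDerivAt_off_countable_of_le _ _ ht hexc
    (continuous_mul_optimalAllocation_sub_optimalPayment hργ hγ hu0).continuousOn hderiv hint, hone]
  ring

end OptimalAuction

theorem consistency_robustness_tradeoff_general (H : ℝ)
    (γ ρ : ℝ) (hρ0 : 0 ≤ ρ) (hργ : ρ ≤ γ) (hγ : 0 < γ)
    (uhat : ℝ) (huhat : uhat ∈ Set.Icc 1 H) :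
    (∃ x p : ℝ → ℝ,
      -- feasibility
      (∀ t ∈ Set.Icc 1 H, 0 ≤ x t ∧ x t ≤ 1) ∧
      -- DSIC: nonnegative payments, monotone allocation, individual rationality,
      -- and Myerson's payment identity
      (∀ t ∈ Set.Icc 1 H, 0 ≤ p t) ∧
      MonotoneOn x (Set.Icc 1 H) ∧
      p 1 ≤ x 1 ∧
      (∀ s t : ℝ, 1 ≤ s → s ≤ t → t ≤ H →
        p t - p s = t * x t - s * x s - ∫ z in s..t, x z) ∧
      -- γ-consistency
      γ * uhat ≤ p uhat ∧
      -- ρ-robustness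
      (∀ t ∈ Set.Icc 1 H, ρ * t ≤ p t)) ↔
    γ + ρ * Real.log (max uhat (H * ρ / γ)) ≤ 1 := by
  have hH : H ∈ Icc 1 H := ⟨huhat.1.trans huhat.2, le_rfl⟩
  constructor
  · rintro ⟨x, p, hfeas, -, hmono, hp1, hid, hcons, hrob⟩
    have hp : ∀ t ∈ Icc 1 H, p t ≤ myersonPayment x t := fun t ht =>
      le_myersonPayment hp1 (hid 1 t le_rfl ht.1 ht.2)
    exact add_mul_log_max_le_of_le_myersonPayment hmono (hfeas H hH).2 hργ hγ huhat
      (fun t ht => (hrob t ht).trans (hp t ht)) (hcons.trans (hp uhat huhat))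
  · intro hbound
    set x := optimalAllocation γ ρ uhat
    have hx : MonotoneOn x (Ioi 0) :=
      monotoneOn_optimalAllocation hρ0 hργ hγ (one_pos.trans_le huhat.1)
    have hx1 : MonotoneOn x (Icc 1 H) := hx.mono fun t ht => one_pos.trans_le ht.1
    have hp : ∀ t ∈ Icc 1 H, myersonPayment x t = optimalPayment γ ρ uhat t := fun t ht =>
      myersonPayment_optimalAllocation hρ0 hργ hγ huhat.1 ht.1
    have hxH : x H = γ + ρ * log (max uhat (H * ρ / γ)) := by
      simp only [x, optimalAllocation, if_pos huhat.2, mul_comm ρ H]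
    refine ⟨x, myersonPayment x, fun t ht => ⟨?_, ?_⟩, fun t ht => ?_, hx1, ?_, ?_, ?_, ?_⟩
    · exact optimalAllocation_nonneg hρ0 hγ.le huhat.1 ht.1
    · exact (hx1 ht hH ht.2).trans (hxH ▸ hbound)
    · rw [hp t ht]
      exact (mul_nonneg hρ0 (zero_le_one.trans ht.1)).trans (mul_le_optimalPayment t)
    · simp [myersonPayment]
    · intro s t hs hst htH
      exact myersonPayment_sub_myersonPayment
        (hx1.mono (uIcc_subset_Icc ⟨le_rfl, hH.1⟩ ⟨hs, hst.trans htH⟩)).intervalIntegrable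
        (hx1.mono (uIcc_subset_Icc ⟨le_rfl, hH.1⟩ ⟨hs.trans hst, htH⟩)).intervalIntegrable
    · rw [hp uhat huhat]
      exact mul_le_optimalPayment_self
    · intro t ht
      rw [hp t ht]
      exact mul_le_optimalPayment t

/-- Theorem 1 of the paper: a characterization of the pairs of consistency and
robustness parameters `(γ, ρ)` for which a feasible DSIC single-bidder auction
on `[1, H]` with prediction `uhat` exists. -/
theorem consistency_robustness_tradeoff (H : ℝ) (hH : 1 < H)
    (γ ρ : ℝ) (hρ0 : 0 ≤ ρ) (hργ : ρ ≤ γ) (hγ1 : γ ≤ 1) (hγ : 0 < γ)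
    (uhat : ℝ) (huhat : uhat ∈ Set.Icc 1 H) :
    (∃ x p : ℝ → ℝ,
      -- feasibility
      (∀ t ∈ Set.Icc 1 H, 0 ≤ x t ∧ x t ≤ 1) ∧
      -- DSIC: nonnegative payments, monotone allocation, individual rationality,
      -- and Myerson's payment identity
      (∀ t ∈ Set.Icc 1 H, 0 ≤ p t) ∧
      MonotoneOn x (Set.Icc 1 H) ∧
      p 1 ≤ x 1 ∧
      (∀ s t : ℝ, 1 ≤ s → s ≤ t → t ≤ H →
        p t - p s = t * x t - s * x s - ∫ z in s..t, x z) ∧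
      -- γ-consistency
      γ * uhat ≤ p uhat ∧
      -- ρ-robustness
      (∀ t ∈ Set.Icc 1 H, ρ * t ≤ p t)) ↔
    γ + ρ * Real.log (max uhat (H * ρ / γ)) ≤ 1 :=
  consistency_robustness_tradeoff_general H γ ρ hρ0 hργ hγ uhat huhat
end

section
/- Let H > 1, let γ, ρ be real numbers with 0 ≤ ρ ≤ γ ≤ 1 and γ > 0, and let û ∈ [1,H]. If (x,p) is a feasible DSIC single-bidder auction on [1,H] satisfying p(t) ≥ ρ·t for all t ∈ [1,H] and p(û) ≥ γ·û, then γ + ρ·ln(max{û, H·ρ/γ}) ≤ 1. -/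
/-!
Myerson's identity and individual rationality give `p t ≤ t x(t) - ∫₁ᵗ x`, and since `x` is
monotone the right-hand side divided by `t²` is at most the right derivative of `(∫₁ᵗ x) / t`.
Integrating, `p H + H ∫₁ᴴ p(s)/s² ds ≤ H x(H) ≤ H`. For the matching lower bound, `p s ≥ ρ s`
everywhere and `p s ≥ p û ≥ γ û` for `s ≥ û` since `p` is monotone; integrating these against
`1/s²` on `[1, û]`, `[û, m]`, `[m, H]` with `m = min (γ û / ρ) H` bounds the same quantity from
below by `H (γ + ρ log (max û (H ρ / γ)))`.
-/

open MeasureTheory intervalIntegral Set Topology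

section Monotone

variable {f : ℝ → ℝ} {a b : ℝ}

theorem MonotoneOn.exists_hasDerivWithinAt_Ioi_primitive (hf : MonotoneOn f (Icc a b))
    {t : ℝ} (ht : t ∈ Ioo a b) :
    ∃ c, f t ≤ c ∧ HasDerivWithinAt (fun u => ∫ z in a..u, f z) c (Ioi t) t := by
  have hft : MonotoneOn f (Icc t b) := hf.mono (Icc_subset_Icc ht.1.le le_rfl)
  have hlow : f t ∈ lowerBounds (f '' Ioo t b) := forall_mem_image.2 fun z hz =>
    hft (left_mem_Icc.2 ht.2.le) (Ioo_subset_Icc_self hz) hz.1.le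
  have hne : (Ioo t b).Nonempty := nonempty_Ioo.2 ht.2
  refine ⟨sInf (f '' Ioo t b), le_csInf (hne.image f) hlow, ?_⟩
  have hlim := (hft.mono Ioo_subset_Icc_self).tendsto_nhdsWithin_Ioo_right hne ⟨f t, hlow⟩
  have hint : IntervalIntegrable f volume a t :=
    (hf.mono (uIcc_subset_Icc (left_mem_Icc.2 (ht.1.trans ht.2).le)
      (Ioo_subset_Icc_self ht))).intervalIntegrable
  have hmeas : StronglyMeasurableAtFilter f (𝓝[>] t) :=
    ⟨Icc t b, Icc_mem_nhdsGT ht.2,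
      (hft.integrableOn_isCompact isCompact_Icc).aestronglyMeasurable⟩
  exact (integral_hasDerivWithinAt_of_tendsto_ae_right (s := Ici t) hint hmeas
    (hlim.mono_left inf_le_left)).mono Ioi_subset_Ici_self

theorem integral_div_sq_le_of_le_mul_sub_primitive (ha : 0 < a) (hab : a ≤ b)
    (hf : MonotoneOn f (Icc a b)) {g : ℝ → ℝ} (hg : IntegrableOn (fun t => g t / t ^ 2) (Icc a b))
    (hgf : ∀ t ∈ Ioo a b, g t ≤ t * f t - ∫ z in a..t, f z) :
    ∫ t in a..b, g t / t ^ 2 ≤ (∫ z in a..b, f z) / b := by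
  choose! c hfc hc using fun t (ht : t ∈ Ioo a b) => hf.exists_hasDerivWithinAt_Ioi_primitive ht
  have hF : ContinuousOn (fun u => ∫ z in a..u, f z) (Icc a b) := by
    have hfi : IntegrableOn f (uIcc a b) := by
      rw [uIcc_of_le hab]; exact hf.integrableOn_isCompact isCompact_Icc
    simpa only [uIcc_of_le hab] using continuousOn_primitive_interval hfi
  have hpos : ∀ t ∈ Icc a b, t ≠ 0 := fun t ht => (ha.trans_le ht.1).ne'
  have hftc := integral_le_sub_of_hasDeriv_right_of_le hab (hF.div continuousOn_id hpos)
    (fun t ht => (hc t ht).div (hasDerivWithinAt_id t _) (hpos t (Ioo_subset_Icc_self ht))) hg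
    fun t ht => div_le_div_of_nonneg_right (by
      nlinarith [hgf t ht, hfc t ht, ha.trans ht.1] : g t ≤ c t * t - _ * 1) (sq_nonneg t)
  simpa using hftc

end Monotone

section DivSq

variable {p : ℝ → ℝ} {a b : ℝ}

theorem MonotoneOn.intervalIntegrable_div_sq (hp : MonotoneOn p (Icc a b)) (ha : 0 < a)
    (hab : a ≤ b) : IntervalIntegrable (fun s => p s / s ^ 2) volume a b := by
  rw [← uIcc_of_le hab] at hp
  have hsq : ∀ s ∈ uIcc a b, s ^ 2 ≠ 0 := fun s hs =>
    pow_ne_zero 2 (ha.trans_le ((le_inf le_rfl hab).trans hs.1)).ne'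
  simpa only [div_eq_mul_inv, Pi.inv_apply] using
    hp.intervalIntegrable.mul_continuousOn ((continuousOn_pow 2).inv₀ hsq)

theorem mul_log_div_le_integral_div_sq (ha : 0 < a) (hab : a ≤ b) {ρ : ℝ}
    (hp : IntervalIntegrable (fun s => p s / s ^ 2) volume a b)
    (hρp : ∀ s ∈ Icc a b, ρ * s ≤ p s) :
    ρ * Real.log (b / a) ≤ ∫ s in a..b, p s / s ^ 2 := by
  have hpos : ∀ s ∈ uIcc a b, s ≠ 0 := fun s hs => (ha.trans_le ((le_inf le_rfl hab).trans hs.1)).ne'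
  rw [← integral_inv fun h => hpos 0 h rfl, ← intervalIntegral.integral_const_mul]
  refine integral_mono_on hab ((continuousOn_const.div continuousOn_id hpos).intervalIntegrable)
    hp fun s hs => ?_
  have hs : 0 < s := ha.trans_le hs.1
  calc ρ * s⁻¹ = ρ * s / s ^ 2 := by field_simp
    _ ≤ p s / s ^ 2 := by gcongr; exact hρp s ‹_›

theorem mul_inv_sub_inv_le_integral_div_sq (ha : 0 < a) (hab : a ≤ b) {c : ℝ}
    (hp : IntervalIntegrable (fun s => p s / s ^ 2) volume a b)
    (hcp : ∀ s ∈ Icc a b, c ≤ p s) :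
    c * (a⁻¹ - b⁻¹) ≤ ∫ s in a..b, p s / s ^ 2 := by
  have hpos : ∀ s ∈ uIcc a b, s ≠ 0 := fun s hs => (ha.trans_le ((le_inf le_rfl hab).trans hs.1)).ne'
  have hq : IntervalIntegrable (fun s => c / s ^ 2) volume a b :=
    (continuousOn_const.div (continuousOn_pow 2) fun s hs =>
      pow_ne_zero 2 (hpos s hs)).intervalIntegrable
  have hderiv : ∀ s ∈ uIcc a b, HasDerivAt (fun s => -(c * s⁻¹)) (c / s ^ 2) s := fun s hs =>
    ((hasDerivAt_inv (hpos s hs)).const_mul c).fun_neg.congr_deriv (by ring)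
  calc c * (a⁻¹ - b⁻¹) = ∫ s in a..b, c / s ^ 2 := by
        rw [integral_eq_sub_of_hasDerivAt hderiv hq]; ring
    _ ≤ _ := integral_mono_on hab hq hp fun s hs => by gcongr; exact hcp s hs

end DivSq

def PaymentIdentityOn (x p : ℝ → ℝ) (a b : ℝ) : Prop :=
  ∀ s t : ℝ, a ≤ s → s ≤ t → t ≤ b → p t - p s = t * x t - s * x s - ∫ z in s..t, x z

namespace PaymentIdentityOn

variable {x p : ℝ → ℝ} {a b : ℝ}

theorem monotoneOn (h : PaymentIdentityOn x p a b) (ha : 0 ≤ a) (hx : MonotoneOn x (Icc a b)) :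
    MonotoneOn p (Icc a b) := by
  intro s hs t ht hst
  have hxt : ∫ z in s..t, x z ≤ (t - s) * x t := by
    calc ∫ z in s..t, x z ≤ ∫ _ in s..t, x t :=
          integral_mono_on hst (hx.mono (uIcc_subset_Icc hs ht)).intervalIntegrable
            intervalIntegrable_const fun z hz => hx ⟨hs.1.trans hz.1, hz.2.trans ht.2⟩ ht hz.2
      _ = (t - s) * x t := by simp
  nlinarith [h s t hs.1 hst ht.2, hx hs ht hst, ha.trans hs.1]

theorem le_mul_sub_primitive (h : PaymentIdentityOn x p a b) (hir : p a ≤ a * x a) {t : ℝ}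
    (ht : t ∈ Icc a b) : p t ≤ t * x t - ∫ z in a..t, x z := by
  linarith [h a t le_rfl ht.1 ht.2]

theorem add_mul_integral_div_sq_le (h : PaymentIdentityOn x p a b) (ha : 0 < a) (hab : a ≤ b)
    (hx : MonotoneOn x (Icc a b)) (hir : p a ≤ a * x a) :
    p b + b * ∫ s in a..b, p s / s ^ 2 ≤ b * x b := by
  have hkey := integral_div_sq_le_of_le_mul_sub_primitive ha hab hx
    ((intervalIntegrable_iff_integrableOn_Icc_of_le hab).1
      ((h.monotoneOn ha.le hx).intervalIntegrable_div_sq ha hab))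
    fun t ht => h.le_mul_sub_primitive hir (Ioo_subset_Icc_self ht)
  have hb := ha.trans_le hab
  rw [le_div_iff₀ hb] at hkey
  linarith [h.le_mul_sub_primitive hir (right_mem_Icc.2 hab)]

end PaymentIdentityOn

section LowerBound

variable {p : ℝ → ℝ} {H γ ρ u : ℝ}

theorem le_integral_div_sq_of_robust_of_consistent (hp : MonotoneOn p (Icc 1 H))
    (hrob : ∀ t ∈ Icc 1 H, ρ * t ≤ p t) (hcons : γ * u ≤ p u) {m : ℝ} (hu : 1 ≤ u) (hum : u ≤ m)
    (hmH : m ≤ H) :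
    ρ * Real.log u + γ * u * (u⁻¹ - m⁻¹) + ρ * Real.log (H / m) ≤
      ∫ s in (1 : ℝ)..H, p s / s ^ 2 := by
  have hm := hu.trans hum
  have hint : ∀ {a b : ℝ}, 1 ≤ a → a ≤ b → b ≤ H →
      IntervalIntegrable (fun s => p s / s ^ 2) volume a b := fun ha hab hb =>
    (hp.mono (Icc_subset_Icc ha hb)).intervalIntegrable_div_sq (one_pos.trans_le ha) hab
  have hearly : ρ * Real.log u ≤ ∫ s in (1 : ℝ)..u, p s / s ^ 2 := by
    simpa using mul_log_div_le_integral_div_sq one_pos hu (hint le_rfl hu (hum.trans hmH))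
      fun s hs => hrob s ⟨hs.1, hs.2.trans (hum.trans hmH)⟩
  have hmid := mul_inv_sub_inv_le_integral_div_sq (one_pos.trans_le hu) hum (hint hu hum hmH)
    fun s hs => hcons.trans (hp ⟨hu, hum.trans hmH⟩ ⟨hu.trans hs.1, hs.2.trans hmH⟩ hs.1)
  have hlate := mul_log_div_le_integral_div_sq (one_pos.trans_le hm) hmH (hint hm hmH le_rfl)
    fun s hs => hrob s ⟨hm.trans hs.1, hs.2⟩
  rw [← integral_add_adjacent_intervals (hint le_rfl hm hmH) (hint hm hmH le_rfl),
    ← integral_add_adjacent_intervals (hint le_rfl hu (hum.trans hmH)) (hint hu hum hmH)]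
  linarith

theorem mul_add_mul_log_max_le_add_mul_integral_div_sq (hp : MonotoneOn p (Icc 1 H))
    (hrob : ∀ t ∈ Icc 1 H, ρ * t ≤ p t) (hcons : γ * u ≤ p u) (hu : 1 ≤ u) (huH : u ≤ H)
    (hγ : 0 < γ) (hργ : ρ ≤ γ) :
    H * (γ + ρ * Real.log (max u (H * ρ / γ))) ≤
      p H + H * ∫ s in (1 : ℝ)..H, p s / s ^ 2 := by
  have hu0 : 0 < u := one_pos.trans_le hu
  have hH0 : 0 < H := hu0.trans_le huH
  rcases le_or_gt (H * ρ) (γ * u) with hHc | hcH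
  · rw [max_eq_left ((div_le_iff₀ hγ).2 (by linarith))]
    have hI := le_integral_div_sq_of_robust_of_consistent hp hrob hcons hu huH le_rfl
    rw [div_self hH0.ne', Real.log_one, mul_zero, add_zero] at hI
    have hpH := hcons.trans (hp ⟨hu, huH⟩ (right_mem_Icc.2 (hu.trans huH)) huH)
    have hmid : H * (γ * u * (u⁻¹ - H⁻¹)) = H * γ - γ * u := by field_simp
    nlinarith [mul_le_mul_of_nonneg_left hI hH0.le]
  · have hρ : 0 < ρ := pos_of_mul_pos_right ((mul_pos hγ hu0).trans hcH) hH0.le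
    set c := γ * u / ρ with hc
    have hcH' : c < H := (div_lt_iff₀ hρ).2 (by linarith)
    have huc : u ≤ c := (le_div_iff₀ hρ).2 (by nlinarith)
    rw [max_eq_right ((le_div_iff₀ hγ).2 (by linarith))]
    have hI := le_integral_div_sq_of_robust_of_consistent hp hrob hcons hu huc hcH'.le
    have hmid : γ * u * (u⁻¹ - c⁻¹) = γ - ρ := by rw [hc]; field_simp
    have hlog : Real.log u + Real.log (H / c) = Real.log (H * ρ / γ) := by
      rw [← Real.log_mul hu0.ne' (by positivity), hc]; congr 1; field_simp
    rw [hmid, add_right_comm, ← mul_add, hlog] at hI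
    have hpH := hrob H (right_mem_Icc.2 (hu.trans huH))
    nlinarith [mul_le_mul_of_nonneg_left hI hH0.le]

end LowerBound

theorem consistency_robustness_necessary_general (H : ℝ) (hH : 1 < H)
    (γ ρ : ℝ) (hργ : ρ ≤ γ) (hγ : 0 < γ)
    (uhat : ℝ) (huhat : uhat ∈ Set.Icc 1 H)
    (x p : ℝ → ℝ)
    -- feasibility
    (hfeas : ∀ t ∈ Set.Icc 1 H, 0 ≤ x t ∧ x t ≤ 1)
    -- DSIC: nonnegative payments, monotone allocation, individual rationality,
    -- and Myerson's payment identity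
    (hmono : MonotoneOn x (Set.Icc 1 H))
    (hir : p 1 ≤ x 1)
    (hmyerson : ∀ s t : ℝ, 1 ≤ s → s ≤ t → t ≤ H →
      p t - p s = t * x t - s * x s - ∫ z in s..t, x z)
    -- ρ-robustness and γ-consistency
    (hrob : ∀ t ∈ Set.Icc 1 H, ρ * t ≤ p t)
    (hcons : γ * uhat ≤ p uhat) :
    γ + ρ * Real.log (max uhat (H * ρ / γ)) ≤ 1 := by
  have hpay : PaymentIdentityOn x p 1 H := hmyerson
  have hp := hpay.monotoneOn zero_le_one hmono
  have hupper : p H + H * ∫ s in (1 : ℝ)..H, p s / s ^ 2 ≤ H :=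
    (hpay.add_mul_integral_div_sq_le one_pos hH.le hmono (by rwa [one_mul])).trans
      (mul_le_of_le_one_right (by linarith) (hfeas H (right_mem_Icc.2 hH.le)).2)
  have hlower :=
    mul_add_mul_log_max_le_add_mul_integral_div_sq hp hrob hcons huhat.1 huhat.2 hγ hργ
  exact le_of_mul_le_mul_left ((hlower.trans hupper).trans_eq (mul_one H).symm) (by linarith)

/-- The "only if" part of Theorem 1 of the paper: any feasible DSIC single-bidder
auction on `[1, H]` that is `γ`-consistent and `ρ`-robust with respect to the
prediction `uhat` satisfies `γ + ρ·ln(max{uhat, H·ρ/γ}) ≤ 1`. -/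
theorem consistency_robustness_necessary (H : ℝ) (hH : 1 < H)
    (γ ρ : ℝ) (hρ0 : 0 ≤ ρ) (hργ : ρ ≤ γ) (hγ1 : γ ≤ 1) (hγ : 0 < γ)
    (uhat : ℝ) (huhat : uhat ∈ Set.Icc 1 H)
    (x p : ℝ → ℝ)
    -- feasibility
    (hfeas : ∀ t ∈ Set.Icc 1 H, 0 ≤ x t ∧ x t ≤ 1)
    -- DSIC: nonnegative payments, monotone allocation, individual rationality,
    -- and Myerson's payment identity
    (hppos : ∀ t ∈ Set.Icc 1 H, 0 ≤ p t)
    (hmono : MonotoneOn x (Set.Icc 1 H))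
    (hir : p 1 ≤ x 1)
    (hmyerson : ∀ s t : ℝ, 1 ≤ s → s ≤ t → t ≤ H →
      p t - p s = t * x t - s * x s - ∫ z in s..t, x z)
    -- ρ-robustness and γ-consistency
    (hrob : ∀ t ∈ Set.Icc 1 H, ρ * t ≤ p t)
    (hcons : γ * uhat ≤ p uhat) :
    γ + ρ * Real.log (max uhat (H * ρ / γ)) ≤ 1 :=
  consistency_robustness_necessary_general H hH γ ρ hργ hγ uhat huhat x p hfeas hmono hir hmyerson
    hrob hcons
end

section
/- Let H > 1, let γ, ρ be real numbers with 0 ≤ ρ ≤ γ ≤ 1 and γ > 0, and let û ∈ [1,H]. If γ + ρ·ln(max{û, H·ρ/γ}) ≤ 1, then there exists a feasible DSIC single-bidder auction (x,p) on [1,H] such that p(t) ≥ ρ·t for all t ∈ [1,H] and p(û) ≥ γ·û. -/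
/-!
Below the prediction `û` the auction charges `ρ t`, from `û` on it charges `max (γ û) (ρ t)`.
With `m t = max (min t û) (t ρ / γ)` (`level` below) the allocation is `c + ρ log m`, where
`c = ρ` below `û` and `c = γ` from `û` on, and the payment is `c t - γ t + γ m`. The utility
`t x(t) - p(t) = ρ t log m + γ (t - m)` is continuous and differentiable with derivative `x`
except at `û` and `γ û / ρ`: wherever `m` moves, either `m = t` and `c = ρ`, or `m = t ρ / γ`
maximises `m ↦ ρ t log m - γ m` and the contribution of `m'` vanishes (envelope theorem).
This gives Myerson's identity; robustness and consistency are read off the payment formula, and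
`x ≤ 1` reduces to the hypothesis at `t = H` by monotonicity.
-/

open Real Set Filter Topology MeasureTheory

namespace PredictionAuction

variable {γ ρ uhat s t : ℝ}

noncomputable def level (γ ρ uhat t : ℝ) : ℝ := max (min t uhat) (t * ρ / γ)

noncomputable def alloc (γ ρ uhat t : ℝ) : ℝ :=
  (if t < uhat then ρ else γ) + ρ * log (level γ ρ uhat t)

noncomputable def utility (γ ρ uhat t : ℝ) : ℝ :=
  ρ * t * log (level γ ρ uhat t) + γ * (t - level γ ρ uhat t)

noncomputable def payment (γ ρ uhat t : ℝ) : ℝ := t * alloc γ ρ uhat t - utility γ ρ uhat t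

theorem level_of_le (hγ : 0 < γ) (hργ : ρ ≤ γ) (ht : 0 ≤ t) (htu : t ≤ uhat) :
    level γ ρ uhat t = t := by
  rw [level, min_eq_left htu, max_eq_left]
  rw [div_le_iff₀ hγ]
  exact mul_le_mul_of_nonneg_left hργ ht

theorem level_of_ge (hut : uhat ≤ t) : level γ ρ uhat t = max uhat (t * ρ / γ) := by
  rw [level, min_eq_right hut]

theorem one_le_level (hu : 1 ≤ uhat) (ht : 1 ≤ t) : 1 ≤ level γ ρ uhat t :=
  le_max_of_le_left (le_min ht hu)

theorem monotone_level (hγ : 0 ≤ γ) (hρ : 0 ≤ ρ) : Monotone (level γ ρ uhat) := fun _ _ hab =>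
  max_le_max (min_le_min_right _ hab)
    (div_le_div_of_nonneg_right (mul_le_mul_of_nonneg_right hab hρ) hγ)

theorem continuous_level : Continuous (level γ ρ uhat) := by
  unfold level
  fun_prop

theorem level_eventuallyEq_id (hγ : 0 < γ) (hργ : ρ ≤ γ) (ht : 0 < t) (htu : t < uhat) :
    level γ ρ uhat =ᶠ[𝓝 t] id := by
  filter_upwards [lt_mem_nhds ht, gt_mem_nhds htu] with z hz hzu
  exact level_of_le hγ hργ hz.le hzu.le

theorem level_eventuallyEq_const (hγ : 0 < γ) (hut : uhat < t) (htρ : t * ρ < γ * uhat) :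
    level γ ρ uhat =ᶠ[𝓝 t] fun _ => uhat := by
  have hρ : ∀ᶠ z in 𝓝 t, z * ρ < γ * uhat :=
    (continuous_mul_const ρ).continuousAt.eventually_lt continuousAt_const htρ
  filter_upwards [lt_mem_nhds hut, hρ] with z hz hzρ
  rw [level_of_ge hz.le, max_eq_left]
  rw [div_le_iff₀ hγ]
  linarith

theorem level_eventuallyEq_mul (hγ : 0 < γ) (htρ : γ * uhat < t * ρ) :
    level γ ρ uhat =ᶠ[𝓝 t] fun z => z * ρ / γ := by
  have hρ : ∀ᶠ z in 𝓝 t, γ * uhat < z * ρ :=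
    continuousAt_const.eventually_lt (continuous_mul_const ρ).continuousAt htρ
  filter_upwards [hρ] with z hzρ
  refine max_eq_right ((min_le_right _ _).trans ?_)
  rw [le_div_iff₀ hγ]
  linarith

theorem hasDerivAt_utility_of_eventuallyEq {m : ℝ → ℝ} {μ : ℝ}
    (hm : level γ ρ uhat =ᶠ[𝓝 t] m) (hμ : HasDerivAt m μ t) (hpos : level γ ρ uhat t ≠ 0) :
    HasDerivAt (utility γ ρ uhat)
      (ρ * log (level γ ρ uhat t) + ρ * t * (μ / level γ ρ uhat t) + γ * (1 - μ)) t := by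
  rw [hm.eq_of_nhds] at hpos ⊢
  have hd := (((hasDerivAt_id t).const_mul ρ).mul (hμ.log hpos)).add
    ((hasDerivAt_id t).sub hμ |>.const_mul γ)
  refine (hd.congr_deriv (by simp only [id]; ring)).congr_of_eventuallyEq ?_
  filter_upwards [hm] with z hz
  simp only [utility, hz, id, Pi.mul_apply, Pi.add_apply, Pi.sub_apply]

theorem hasDerivAt_utility (hγ : 0 < γ) (hργ : ρ ≤ γ) (hu : 1 ≤ uhat) (ht : 1 ≤ t)
    (htu : t ≠ uhat) (htρ : t * ρ ≠ γ * uhat) :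
    HasDerivAt (utility γ ρ uhat) (alloc γ ρ uhat t) t := by
  have hpos : level γ ρ uhat t ≠ 0 := by linarith [one_le_level (γ := γ) (ρ := ρ) hu ht]
  rcases htu.lt_or_gt with hlt | hgt
  · convert hasDerivAt_utility_of_eventuallyEq
      (level_eventuallyEq_id hγ hργ (by linarith) hlt) (hasDerivAt_id t) hpos using 1
    rw [alloc, if_pos hlt, level_of_le hγ hργ (by linarith) hlt.le]
    field_simp
    ring
  rcases htρ.lt_or_gt with hρlt | hρgt
  · convert hasDerivAt_utility_of_eventuallyEq
      (level_eventuallyEq_const hγ hgt hρlt) (hasDerivAt_const t uhat) hpos using 1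
    rw [alloc, if_neg hgt.not_gt]
    ring
  · have hρpos : 0 < ρ := by nlinarith
    convert hasDerivAt_utility_of_eventuallyEq (level_eventuallyEq_mul hγ hρgt)
      (((hasDerivAt_id t).mul_const ρ).div_const γ) hpos using 1
    rw [alloc, if_neg hgt.not_gt, (level_eventuallyEq_mul hγ hρgt).eq_of_nhds]
    field_simp
    ring

theorem monotoneOn_alloc (hγ : 0 < γ) (hρ : 0 ≤ ρ) (hργ : ρ ≤ γ) (hu : 1 ≤ uhat) :
    MonotoneOn (alloc γ ρ uhat) (Ici 1) := by
  intro a ha b _ hab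
  have hstep : (if a < uhat then ρ else γ) ≤ (if b < uhat then ρ else γ) := by
    split_ifs <;> linarith
  have hlog : log (level γ ρ uhat a) ≤ log (level γ ρ uhat b) :=
    log_le_log (by linarith [one_le_level (γ := γ) (ρ := ρ) hu ha])
      (monotone_level hγ.le hρ hab)
  exact add_le_add hstep (mul_le_mul_of_nonneg_left hlog hρ)

theorem integral_alloc (hγ : 0 < γ) (hρ : 0 ≤ ρ) (hργ : ρ ≤ γ) (hu : 1 ≤ uhat)
    (hs : 1 ≤ s) (hst : s ≤ t) :
    ∫ z in s..t, alloc γ ρ uhat z = utility γ ρ uhat t - utility γ ρ uhat s := by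
  have hIcc : Icc s t ⊆ Ici 1 := fun z hz => hs.trans hz.1
  refine integral_eq_of_hasDerivAt_off_countable_of_le _ _ hst
    ((countable_singleton (γ * uhat / ρ)).insert uhat) ?_ ?_
    (((monotoneOn_alloc hγ hρ hργ hu).mono (uIcc_of_le hst ▸ hIcc)).intervalIntegrable)
  · have hlog : ContinuousOn (fun z => log (level γ ρ uhat z)) (Icc s t) :=
      continuous_level.continuousOn.log fun z hz => by
        linarith [one_le_level (γ := γ) (ρ := ρ) hu (hIcc hz)]
    unfold utility
    exact ((continuousOn_const.mul continuousOn_id).mul hlog).add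
      (continuousOn_const.mul (continuousOn_id.sub continuous_level.continuousOn))
  · rintro z ⟨hz, hzs⟩
    simp only [mem_insert_iff, mem_singleton_iff, not_or] at hzs
    refine hasDerivAt_utility hγ hργ hu (hs.trans hz.1.le) hzs.1 fun hzρ => hzs.2 ?_
    have hρ0 : ρ ≠ 0 := by rintro rfl; nlinarith
    field_simp
    linarith

theorem alloc_nonneg (hρ : 0 ≤ ρ) (hργ : ρ ≤ γ) (hu : 1 ≤ uhat) (ht : 1 ≤ t) :
    0 ≤ alloc γ ρ uhat t :=
  add_nonneg (by split_ifs <;> linarith) (mul_nonneg hρ (log_nonneg (one_le_level hu ht)))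

theorem alloc_le_of_le {H : ℝ} (hγ : 0 < γ) (hρ : 0 ≤ ρ) (hργ : ρ ≤ γ) (hu : 1 ≤ uhat)
    (ht : 1 ≤ t) (htH : t ≤ H) :
    alloc γ ρ uhat t ≤ γ + ρ * log (level γ ρ uhat H) := by
  have hc : (if t < uhat then ρ else γ) ≤ γ := by split_ifs <;> linarith
  have hlog : log (level γ ρ uhat t) ≤ log (level γ ρ uhat H) :=
    log_le_log (by linarith [one_le_level (γ := γ) (ρ := ρ) hu ht])
      (monotone_level hγ.le hρ htH)
  exact add_le_add hc (mul_le_mul_of_nonneg_left hlog hρ)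

theorem payment_eq (t : ℝ) :
    payment γ ρ uhat t = (if t < uhat then ρ - γ else 0) * t + γ * level γ ρ uhat t := by
  unfold payment alloc utility
  split_ifs <;> ring

theorem mul_le_payment (hγ : 0 < γ) (hργ : ρ ≤ γ) (ht : 0 ≤ t) : ρ * t ≤ payment γ ρ uhat t := by
  rw [payment_eq]
  split_ifs with htu
  · rw [level_of_le hγ hργ ht htu.le]
    linarith
  · calc ρ * t = γ * (t * ρ / γ) := by field_simp
      _ ≤ 0 * t + γ * level γ ρ uhat t := by
        rw [zero_mul, zero_add]
        exact mul_le_mul_of_nonneg_left (le_max_right _ _) hγ.le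

theorem payment_self (hγ : 0 < γ) (hργ : ρ ≤ γ) (hu : 0 ≤ uhat) :
    payment γ ρ uhat uhat = γ * uhat := by
  rw [payment_eq, if_neg (lt_irrefl _), level_of_le hγ hργ hu le_rfl]
  ring

theorem payment_one (hγ : 0 < γ) (hργ : ρ ≤ γ) (hu : 1 ≤ uhat) :
    payment γ ρ uhat 1 = alloc γ ρ uhat 1 := by
  simp [payment, utility, level_of_le hγ hργ zero_le_one hu]

end PredictionAuction

open PredictionAuction in
theorem consistency_robustness_sufficient_general (H : ℝ)
    (γ ρ : ℝ) (hρ0 : 0 ≤ ρ) (hργ : ρ ≤ γ) (hγ : 0 < γ)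
    (uhat : ℝ) (huhat : uhat ∈ Set.Icc 1 H)
    (hcond : γ + ρ * Real.log (max uhat (H * ρ / γ)) ≤ 1) :
    ∃ x p : ℝ → ℝ,
      -- feasibility
      (∀ t ∈ Set.Icc 1 H, 0 ≤ x t ∧ x t ≤ 1) ∧
      -- DSIC: nonnegative payments, monotone allocation, individual rationality,
      -- and Myerson's payment identity
      (∀ t ∈ Set.Icc 1 H, 0 ≤ p t) ∧
      MonotoneOn x (Set.Icc 1 H) ∧
      p 1 ≤ x 1 ∧
      (∀ s t : ℝ, 1 ≤ s → s ≤ t → t ≤ H →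
        p t - p s = t * x t - s * x s - ∫ z in s..t, x z) ∧
      -- ρ-robustness and γ-consistency
      (∀ t ∈ Set.Icc 1 H, ρ * t ≤ p t) ∧
      γ * uhat ≤ p uhat := by
  obtain ⟨hu, huH⟩ := huhat
  have hlevelH : level γ ρ uhat H = max uhat (H * ρ / γ) := level_of_ge huH
  have hrobust : ∀ t ∈ Icc 1 H, ρ * t ≤ payment γ ρ uhat t := fun t ht =>
    mul_le_payment hγ hργ (by linarith [ht.1])
  refine ⟨alloc γ ρ uhat, payment γ ρ uhat, fun t ht => ⟨alloc_nonneg hρ0 hργ hu ht.1, ?_⟩,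
    fun t ht => (mul_nonneg hρ0 (by linarith [ht.1])).trans (hrobust t ht),
    (monotoneOn_alloc hγ hρ0 hργ hu).mono Icc_subset_Ici_self,
    (payment_one hγ hργ hu).le, fun s t hs hst _ => ?_, hrobust,
    (payment_self hγ hργ (by linarith)).ge⟩
  · linarith [hlevelH ▸ alloc_le_of_le hγ hρ0 hργ hu ht.1 ht.2]
  · rw [integral_alloc hγ hρ0 hργ hu hs hst]
    unfold payment
    ring

/-- The "if" part of Theorem 1 of the paper: if `γ + ρ·ln(max{uhat, H·ρ/γ}) ≤ 1`
then there exists a feasible DSIC single-bidder auction on `[1, H]` that is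
`γ`-consistent and `ρ`-robust with respect to the prediction `uhat`. -/
theorem consistency_robustness_sufficient (H : ℝ) (hH : 1 < H)
    (γ ρ : ℝ) (hρ0 : 0 ≤ ρ) (hργ : ρ ≤ γ) (hγ1 : γ ≤ 1) (hγ : 0 < γ)
    (uhat : ℝ) (huhat : uhat ∈ Set.Icc 1 H)
    (hcond : γ + ρ * Real.log (max uhat (H * ρ / γ)) ≤ 1) :
    ∃ x p : ℝ → ℝ,
      -- feasibility
      (∀ t ∈ Set.Icc 1 H, 0 ≤ x t ∧ x t ≤ 1) ∧
      -- DSIC: nonnegative payments, monotone allocation, individual rationality,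
      -- and Myerson's payment identity
      (∀ t ∈ Set.Icc 1 H, 0 ≤ p t) ∧
      MonotoneOn x (Set.Icc 1 H) ∧
      p 1 ≤ x 1 ∧
      (∀ s t : ℝ, 1 ≤ s → s ≤ t → t ≤ H →
        p t - p s = t * x t - s * x s - ∫ z in s..t, x z) ∧
      -- ρ-robustness and γ-consistency
      (∀ t ∈ Set.Icc 1 H, ρ * t ≤ p t) ∧
      γ * uhat ≤ p uhat :=
  consistency_robustness_sufficient_general H γ ρ hρ0 hργ hγ uhat huhat hcond
end

section
/- Let H > 1, let û ∈ [1,H], and let ρ : [1,H] → [0,1] be a differentiable function such that ρ(η) is non-increasing in η and η·ρ(η) is non-decreasing in η. There exists a feasible DSIC single-bidder auction (x,p) on [1,H] with the error-dependent robustness guarantee p(t) ≥ ρ(û/t)·t for all t ∈ [1,û] and p(t) ≥ ρ(t/û)·t for all t ∈ [û,H] if and only if ρ(H/û) + ∫_1^û ρ(z)/z dz + ∫_1^{H/û} ρ(z)/z dz ≤ 1. -/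
/-!
Write `g = ρ ∘ predictionError û`. The robustness guarantee is the payment floor `p t ≥ t g(t)`
on `[1, H]`, and the substitutions `z ↦ û / z` on `[1, û]` and `z ↦ z / û` on `[û, H]` turn
`∫₁^H g(z)/z dz` into the two integrals of the theorem, while `g(H) = ρ(H/û)`.

Necessity: with `F(t) = ∫₁^t x`, Myerson's identity and individual rationality give
`t g(t) + F(t) ≤ t x(t)`, i.e. `g(t)/t ≤ (F(t)/t)'`. Integrating over `[1, H]` and evaluating the
same inequality at `t = H` with `x(H) ≤ 1` yields `g(H) + ∫₁^H g(z)/z dz ≤ 1`.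

Sufficiency: the allocation `x(t) = g(t) + ∫₁^t g(z)/z dz` has Myerson payment exactly `t g(t)`.
It is monotone since `g` increases on `[1, û]` and `t g(t)` increases on `[û, H]`, and its largest
value `x(H)` is the left-hand side of the condition.
-/

open MeasureTheory intervalIntegral Set Topology

theorem hasDerivAt_integral_of_continuousWithinAt_Icc {f : ℝ → ℝ} {a b z : ℝ}
    (hf : IntegrableOn f (Icc a b)) (hz : z ∈ Ioo a b)
    (hfz : ContinuousWithinAt f (Icc a b) z) :
    HasDerivAt (fun u => ∫ x in a..u, f x) (f z) z := by
  have hnhds : Icc a b ∈ 𝓝 z := Icc_mem_nhds hz.1 hz.2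
  exact integral_hasDerivAt_right
    ((intervalIntegrable_iff_integrableOn_Icc_of_le hz.1.le).2
      (hf.mono_set (Icc_subset_Icc_right hz.2.le)))
    ⟨Icc a b, hnhds, hf.aestronglyMeasurable⟩ (hfz.continuousAt hnhds)

theorem integral_div_sq {a b : ℝ} (c : ℝ) (ha : 0 < a) (hab : a ≤ b) :
    ∫ z in a..b, c / z ^ 2 = c / a - c / b := by
  have hpos : ∀ z ∈ uIcc a b, z ≠ 0 := fun z hz => (ha.trans_le (by simpa [hab] using hz.1)).ne'
  rw [integral_eq_sub_of_hasDerivAt (f := fun z => -c * z⁻¹) (f' := fun z => c / z ^ 2)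
    (fun z hz => ?_) (continuousOn_const.div (continuousOn_pow 2)
      fun z hz => pow_ne_zero 2 (hpos z hz)).intervalIntegrable]
  · ring
  · exact ((hasDerivAt_inv (hpos z hz)).const_mul (-c)).congr_deriv (by ring)

theorem integral_div_le_integral_div_of_mul_add_integral_le {x g : ℝ → ℝ} {a b : ℝ}
    (ha : 0 < a) (hab : a ≤ b) (hx : MonotoneOn x (Icc a b))
    (hg : IntervalIntegrable (fun z => g z / z) volume a b)
    (h : ∀ t ∈ Icc a b, g t * t + ∫ z in a..t, x z ≤ t * x t) :
    ∫ z in a..b, g z / z ≤ (∫ z in a..b, x z) / b := by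
  set F : ℝ → ℝ := fun t => ∫ z in a..t, x z
  have hpos : ∀ z ∈ Icc a b, z ≠ 0 := fun z hz => (ha.trans_le hz.1).ne'
  have hx_int : IntegrableOn x (Icc a b) := hx.integrableOn_isCompact isCompact_Icc
  have hF_cont : ContinuousOn F (Icc a b) := by
    simpa [uIcc_of_le hab] using continuousOn_primitive_interval (μ := volume) (a := a) (b := b)
      (f := x) (by simpa [uIcc_of_le hab] using hx_int)
  have hderiv_int : IntervalIntegrable (fun z => x z / z - F z / z ^ 2) volume a b := by
    refine IntervalIntegrable.sub ?_ ?_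
    · simp only [div_eq_mul_inv]
      exact (intervalIntegrable_iff_integrableOn_Icc_of_le hab).2
        (hx_int.mul_continuousOn (continuousOn_inv₀.mono fun z hz => hpos z hz) isCompact_Icc)
    · exact (hF_cont.div (continuousOn_pow 2) fun z hz =>
        pow_ne_zero 2 (hpos z hz)).intervalIntegrable_of_Icc hab
  -- `F` has derivative `x z` wherever the monotone `x` is continuous, i.e. off a countable set
  have hFTC : ∫ z in a..b, (x z / z - F z / z ^ 2) = F b / b - F a / a := by
    refine integral_eq_of_hasDerivAt_off_countable_of_le (fun t => F t / t) _ hab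
      hx.countable_not_continuousWithinAt (hF_cont.div continuousOn_id hpos) ?_ hderiv_int
    rintro z ⟨hz, hcont⟩
    have hxz : ContinuousWithinAt x (Icc a b) z := by
      by_contra hc; exact hcont ⟨Ioo_subset_Icc_self hz, hc⟩
    have hz0 : z ≠ 0 := hpos z (Ioo_subset_Icc_self hz)
    exact ((hasDerivAt_integral_of_continuousWithinAt_Icc hx_int hz hxz).div
      (hasDerivAt_id' z) hz0).congr_deriv (by field_simp; rfl)
  calc ∫ z in a..b, g z / z ≤ ∫ z in a..b, (x z / z - F z / z ^ 2) := by
        refine integral_mono_on hab hg hderiv_int fun z hz => ?_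
        have hz0 : 0 < z := ha.trans_le hz.1
        rw [le_sub_iff_add_le, div_add_div _ _ hz0.ne' (by positivity),
          div_le_div_iff₀ (by positivity) hz0]
        nlinarith [h z hz]
    _ = F b / b := by simp [hFTC, F]

theorem add_integral_div_le_one_of_mul_le_payment {x p g : ℝ → ℝ} {H : ℝ} (hH : 1 ≤ H)
    (hxH : x H ≤ 1) (hx : MonotoneOn x (Icc 1 H)) (hIR : p 1 ≤ x 1)
    (hMyerson : ∀ s t : ℝ, 1 ≤ s → s ≤ t → t ≤ H →
      p t - p s = t * x t - s * x s - ∫ z in s..t, x z)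
    (hpay : ∀ t ∈ Icc 1 H, g t * t ≤ p t)
    (hg : IntervalIntegrable (fun z => g z / z) volume 1 H) :
    g H + ∫ z in (1:ℝ)..H, g z / z ≤ 1 := by
  have hbound : ∀ t ∈ Icc 1 H, g t * t + ∫ z in (1:ℝ)..t, x z ≤ t * x t := fun t ht => by
    linarith [hpay t ht, hMyerson 1 t le_rfl ht.1 ht.2]
  have hintegral := integral_div_le_integral_div_of_mul_add_integral_le one_pos hH hx hg hbound
  have hH0 : 0 < H := one_pos.trans_le hH
  have hgH : g H + (∫ z in (1:ℝ)..H, x z) / H ≤ 1 := by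
    rw [← le_sub_iff_add_le', div_le_iff₀ hH0]
    nlinarith [hbound H ⟨hH, le_rfl⟩]
  linarith

noncomputable def guaranteeAllocation (g : ℝ → ℝ) (t : ℝ) : ℝ :=
  g t + ∫ z in (1:ℝ)..t, g z / z

section guaranteeAllocation

variable {g : ℝ → ℝ} {H : ℝ}

theorem ContinuousOn.div_id_of_one_le (hg : ContinuousOn g (Icc 1 H)) :
    ContinuousOn (fun z => g z / z) (Icc 1 H) :=
  hg.div continuousOn_id fun _ hz => (one_pos.trans_le hz.1).ne'

theorem ContinuousOn.intervalIntegrable_div_id (hg : ContinuousOn g (Icc 1 H)) {s t : ℝ}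
    (hs : s ∈ Icc 1 H) (ht : t ∈ Icc 1 H) :
    IntervalIntegrable (fun z => g z / z) volume s t :=
  (hg.div_id_of_one_le.mono (uIcc_subset_Icc hs ht)).intervalIntegrable

theorem guaranteeAllocation_payment_identity (hg : ContinuousOn g (Icc 1 H)) {s t : ℝ}
    (hs : 1 ≤ s) (hst : s ≤ t) (ht : t ≤ H) :
    t * g t - s * g s = t * guaranteeAllocation g t - s * guaranteeAllocation g s
      - ∫ z in s..t, guaranteeAllocation g z := by
  set G : ℝ → ℝ := fun u => ∫ z in (1:ℝ)..u, g z / z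
  have hH : 1 ≤ H := hs.trans (hst.trans ht)
  have hq_int : IntegrableOn (fun z => g z / z) (Icc 1 H) :=
    hg.div_id_of_one_le.integrableOn_compact isCompact_Icc
  have hG : ContinuousOn G (Icc 1 H) := by
    simpa [uIcc_of_le hH] using continuousOn_primitive_interval (μ := volume) (a := 1) (b := H)
      (f := fun z => g z / z) (by rwa [uIcc_of_le hH])
  have hsub : Icc s t ⊆ Icc 1 H := Icc_subset_Icc hs ht
  have hx_cont : ContinuousOn (guaranteeAllocation g) (Icc s t) := (hg.add hG).mono hsub
  have hFTC : ∫ z in s..t, guaranteeAllocation g z = t * G t - s * G s := by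
    refine integral_eq_sub_of_hasDerivAt_of_le hst ((continuousOn_id.mul hG).mono hsub)
      (fun z hz => ?_) (hx_cont.intervalIntegrable_of_Icc hst)
    have hz : z ∈ Ioo 1 H := ⟨hs.trans_lt hz.1, hz.2.trans_le ht⟩
    have hGz := hasDerivAt_integral_of_continuousWithinAt_Icc hq_int hz
      (hg.div_id_of_one_le z (Ioo_subset_Icc_self hz))
    refine ((hasDerivAt_id' z).mul hGz).congr_deriv ?_
    simp only [guaranteeAllocation]
    field_simp [(one_pos.trans hz.1).ne']
    ring
  rw [hFTC]
  simp only [guaranteeAllocation, G]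
  ring

theorem guaranteeAllocation_nonneg (hg0 : ∀ z ∈ Icc 1 H, 0 ≤ g z) {t : ℝ} (ht : t ∈ Icc 1 H) :
    0 ≤ guaranteeAllocation g t := by
  refine add_nonneg (hg0 t ht) (integral_nonneg ht.1 fun z hz => ?_)
  exact div_nonneg (hg0 z ⟨hz.1, hz.2.trans ht.2⟩) (zero_le_one.trans hz.1)

theorem guaranteeAllocation_sub_guaranteeAllocation (hg : ContinuousOn g (Icc 1 H)) {s t : ℝ}
    (hs : s ∈ Icc 1 H) (ht : t ∈ Icc 1 H) :
    guaranteeAllocation g t - guaranteeAllocation g s = g t - g s + ∫ z in s..t, g z / z := by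
  have hH : (1:ℝ) ≤ H := hs.1.trans hs.2
  rw [← integral_interval_sub_left (hg.intervalIntegrable_div_id ⟨le_rfl, hH⟩ ht)
    (hg.intervalIntegrable_div_id ⟨le_rfl, hH⟩ hs), guaranteeAllocation, guaranteeAllocation]
  ring

theorem monotoneOn_guaranteeAllocation_of_monotoneOn {m : ℝ} (hm : m ≤ H)
    (hg : ContinuousOn g (Icc 1 H)) (hg0 : ∀ z ∈ Icc 1 H, 0 ≤ g z)
    (hmono : MonotoneOn g (Icc 1 m)) : MonotoneOn (guaranteeAllocation g) (Icc 1 m) := by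
  intro s hs t ht hst
  have hsub : Icc 1 m ⊆ Icc 1 H := Icc_subset_Icc_right hm
  have hnonneg : 0 ≤ ∫ z in s..t, g z / z := integral_nonneg hst fun z hz =>
    div_nonneg (hg0 z (hsub ⟨hs.1.trans hz.1, hz.2.trans ht.2⟩))
      (zero_le_one.trans (hs.1.trans hz.1))
  linarith [hmono hs ht hst, guaranteeAllocation_sub_guaranteeAllocation hg (hsub hs) (hsub ht)]

theorem monotoneOn_guaranteeAllocation_of_monotoneOn_mul {m : ℝ} (hm : 1 ≤ m)
    (hg : ContinuousOn g (Icc 1 H))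
    (hmono : MonotoneOn (fun z => z * g z) (Icc m H)) :
    MonotoneOn (guaranteeAllocation g) (Icc m H) := by
  intro s hs t ht hst
  have hsub : Icc m H ⊆ Icc 1 H := Icc_subset_Icc_left hm
  have hs0 : 0 < s := one_pos.trans_le (hm.trans hs.1)
  -- `z g(z) ≥ s g(s)` on `[s, t]` bounds the integral below by that of `s g(s) / z²`
  have hintegral : g s - s * g s / t ≤ ∫ z in s..t, g z / z := calc
    g s - s * g s / t = ∫ z in s..t, s * g s / z ^ 2 := by
      rw [integral_div_sq _ hs0 hst, mul_div_cancel_left₀ _ hs0.ne']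
    _ ≤ ∫ z in s..t, g z / z := by
      refine integral_mono_on hst ?_ (hg.intervalIntegrable_div_id (hsub hs) (hsub ht))
        fun z hz => ?_
      · exact (continuousOn_const.div (continuousOn_pow 2) fun z hz =>
          pow_ne_zero 2 (hs0.trans_le hz.1).ne').intervalIntegrable_of_Icc hst
      · have hz0 : 0 < z := hs0.trans_le hz.1
        rw [div_le_div_iff₀ (by positivity) hz0]
        nlinarith [hmono hs ⟨hs.1.trans hz.1, hz.2.trans ht.2⟩ hz.1]
  have hgt : s * g s / t ≤ g t := by
    rw [div_le_iff₀ (hs0.trans_le hst)]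
    linarith [hmono hs ht hst]
  linarith [guaranteeAllocation_sub_guaranteeAllocation hg (hsub hs) (hsub ht)]

theorem monotoneOn_guaranteeAllocation {m : ℝ} (hm : m ∈ Icc 1 H)
    (hg : ContinuousOn g (Icc 1 H)) (hg0 : ∀ z ∈ Icc 1 H, 0 ≤ g z)
    (hlow : MonotoneOn g (Icc 1 m)) (hhigh : MonotoneOn (fun z => z * g z) (Icc m H)) :
    MonotoneOn (guaranteeAllocation g) (Icc 1 H) := by
  rw [← Icc_union_Icc_eq_Icc hm.1 hm.2]
  exact (monotoneOn_guaranteeAllocation_of_monotoneOn hm.2 hg hg0 hlow).union_right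
    (monotoneOn_guaranteeAllocation_of_monotoneOn_mul hm.1 hg hhigh)
    (isGreatest_Icc hm.1) (isLeast_Icc hm.2)

end guaranteeAllocation

theorem integral_comp_div_div {f : ℝ → ℝ} {c : ℝ} (hc : c ≠ 0) (a b : ℝ) :
    ∫ z in a..b, f (z / c) / z = ∫ w in a / c..b / c, f w / w := by
  have hscale := integral_comp_div (fun w => f w / w) hc (a := a) (b := b)
  rw [← inv_smul_eq_iff₀ hc, ← intervalIntegral.integral_smul] at hscale
  rw [← hscale]
  refine integral_congr fun z _ => ?_
  simp only [smul_eq_mul, div_div_eq_mul_div]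
  field_simp

theorem integral_comp_div_left_div {f : ℝ → ℝ} {a b c : ℝ} (ha : 0 < a) (hab : a ≤ b)
    (hc : 0 < c) (hf : ContinuousOn f (Icc (c / b) (c / a))) :
    ∫ z in a..b, f (c / z) / z = ∫ w in c / b..c / a, f w / w := by
  have hpos : ∀ z ∈ uIcc a b, 0 < z := fun z hz => ha.trans_le (by simpa [hab] using hz.1)
  have hsubst := integral_comp_mul_deriv' (f := fun z => c / z) (f' := fun z => -(c / z ^ 2))
    (g := fun w => f w / w) (a := a) (b := b)
    (fun z hz => ((hasDerivAt_inv (hpos z hz).ne').const_mul c).congr_deriv (by field_simp))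
    (continuousOn_const.div (continuousOn_pow 2) fun z hz => pow_ne_zero 2 (hpos z hz).ne').neg
    (hf.div continuousOn_id (fun w hw => (div_pos hc (ha.trans_le hab)).trans_le hw.1 |>.ne')
      |>.mono ?_)
  · rw [integral_symm (c / a), ← hsubst, ← intervalIntegral.integral_neg]
    refine integral_congr fun z hz => ?_
    have hz0 := hpos z hz
    simp only [Function.comp_apply]
    field_simp
  · rintro _ ⟨z, hz, rfl⟩
    rw [uIcc_of_le hab] at hz
    exact ⟨div_le_div_of_nonneg_left hc.le (ha.trans_le hz.1) hz.2,
      div_le_div_of_nonneg_left hc.le ha hz.1⟩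

noncomputable def predictionError (uhat t : ℝ) : ℝ := max (t / uhat) (uhat / t)

section predictionError

variable {uhat t H : ℝ}

theorem predictionError_of_le (ht : 0 < t) (h : t ≤ uhat) :
    predictionError uhat t = uhat / t := by
  have hu : 0 < uhat := ht.trans_le h
  refine max_eq_right ?_
  rw [div_le_div_iff₀ hu ht]
  nlinarith

theorem predictionError_of_ge (hu : 0 < uhat) (h : uhat ≤ t) :
    predictionError uhat t = t / uhat := by
  have ht : 0 < t := hu.trans_le h
  refine max_eq_left ?_
  rw [div_le_div_iff₀ ht hu]
  nlinarith

theorem predictionError_mem_Icc (hu : uhat ∈ Icc 1 H) (ht : t ∈ Icc 1 H) :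
    predictionError uhat t ∈ Icc 1 H := by
  have hu0 : 0 < uhat := one_pos.trans_le hu.1
  have ht0 : 0 < t := one_pos.trans_le ht.1
  rcases le_total t uhat with h | h
  · rw [predictionError_of_le ht0 h]
    exact ⟨(one_le_div ht0).2 h, (div_le_self hu0.le ht.1).trans hu.2⟩
  · rw [predictionError_of_ge hu0 h]
    exact ⟨(one_le_div hu0).2 h, (div_le_self ht0.le hu.1).trans ht.2⟩

variable {ρ : ℝ → ℝ}

theorem ContinuousOn.comp_predictionError (hρ : ContinuousOn ρ (Icc 1 H)) (hu : uhat ∈ Icc 1 H) :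
    ContinuousOn (fun t => ρ (predictionError uhat t)) (Icc 1 H) := by
  refine hρ.comp (f := predictionError uhat) ?_ fun t ht => predictionError_mem_Icc hu ht
  exact ContinuousOn.sup (continuousOn_id.div_const uhat)
    (continuousOn_const.div continuousOn_id fun t ht => (one_pos.trans_le ht.1).ne')

theorem AntitoneOn.monotoneOn_comp_predictionError (hρ : AntitoneOn ρ (Icc 1 H))
    (hu : uhat ∈ Icc 1 H) : MonotoneOn (fun t => ρ (predictionError uhat t)) (Icc 1 uhat) := by
  intro s hs t ht hst
  have hs0 : 0 < s := one_pos.trans_le hs.1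
  have hsub : Icc 1 uhat ⊆ Icc 1 H := Icc_subset_Icc_right hu.2
  have hmem : ∀ z ∈ Icc 1 uhat, uhat / z ∈ Icc 1 H := fun z hz =>
    predictionError_of_le (one_pos.trans_le hz.1) hz.2 ▸ predictionError_mem_Icc hu (hsub hz)
  simp only [predictionError_of_le hs0 hs.2, predictionError_of_le (hs0.trans_le hst) ht.2]
  exact hρ (hmem t ht) (hmem s hs) (div_le_div_of_nonneg_left (one_pos.trans_le hu.1).le hs0 hst)

theorem MonotoneOn.monotoneOn_mul_comp_predictionError
    (hρ : MonotoneOn (fun η => η * ρ η) (Icc 1 H)) (hu : uhat ∈ Icc 1 H) :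
    MonotoneOn (fun t => t * ρ (predictionError uhat t)) (Icc uhat H) := by
  intro s hs t ht hst
  have hu0 : 0 < uhat := one_pos.trans_le hu.1
  have hsub : Icc uhat H ⊆ Icc 1 H := Icc_subset_Icc_left hu.1
  have hmem : ∀ z ∈ Icc uhat H, z / uhat ∈ Icc 1 H := fun z hz =>
    predictionError_of_ge hu0 hz.1 ▸ predictionError_mem_Icc hu (hsub hz)
  have key : ∀ z ∈ Icc uhat H, z * ρ (predictionError uhat z) = uhat * (z / uhat * ρ (z / uhat)) :=
    fun z hz => by rw [predictionError_of_ge hu0 hz.1]; field_simp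
  simp only [key s hs, key t ht]
  exact mul_le_mul_of_nonneg_left (hρ (hmem s hs) (hmem t ht) (by gcongr)) hu0.le

theorem integral_comp_predictionError_div (hρ : ContinuousOn ρ (Icc 1 H)) (hu : uhat ∈ Icc 1 H) :
    ∫ z in (1:ℝ)..H, ρ (predictionError uhat z) / z
      = (∫ z in (1:ℝ)..uhat, ρ z / z) + ∫ z in (1:ℝ)..(H / uhat), ρ z / z := by
  have hu0 : 0 < uhat := one_pos.trans_le hu.1
  have hH : 1 ≤ H := hu.1.trans hu.2
  have hint := (hρ.comp_predictionError hu).div_id_of_one_le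
  rw [← integral_add_adjacent_intervals (b := uhat)
    (hint.mono (uIcc_subset_Icc ⟨le_rfl, hH⟩ hu)).intervalIntegrable
    (hint.mono (uIcc_subset_Icc hu ⟨hH, le_rfl⟩)).intervalIntegrable]
  have hlow : EqOn (fun z => ρ (predictionError uhat z) / z) (fun z => ρ (uhat / z) / z)
      (uIcc 1 uhat) := fun z hz => by
    rw [uIcc_of_le hu.1] at hz
    simp only [predictionError_of_le (one_pos.trans_le hz.1) hz.2]
  have hhigh : EqOn (fun z => ρ (predictionError uhat z) / z) (fun z => ρ (z / uhat) / z)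
      (uIcc uhat H) := fun z hz => by
    rw [uIcc_of_le hu.2] at hz
    simp only [predictionError_of_ge hu0 hz.1]
  have hρu : ContinuousOn ρ (Icc (uhat / uhat) (uhat / 1)) := by
    rw [div_self hu0.ne', div_one]
    exact hρ.mono (Icc_subset_Icc_right hu.2)
  rw [integral_congr hlow, integral_congr hhigh, integral_comp_div_left_div one_pos hu.1 hu0 hρu,
    integral_comp_div_div hu0.ne', div_self hu0.ne', div_one]

end predictionError

theorem robustness_of_prediction_error_general (H : ℝ)
    (uhat : ℝ) (huhat : uhat ∈ Set.Icc 1 H)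
    (ρ : ℝ → ℝ)
    (hρrange : ∀ η ∈ Set.Icc 1 H, ρ η ∈ Set.Icc (0 : ℝ) 1)
    (hρdiff : DifferentiableOn ℝ ρ (Set.Icc 1 H))
    (hρanti : AntitoneOn ρ (Set.Icc 1 H))
    (hρmono : MonotoneOn (fun η => η * ρ η) (Set.Icc 1 H)) :
    (∃ x p : ℝ → ℝ,
      -- feasibility
      (∀ t ∈ Set.Icc 1 H, 0 ≤ x t ∧ x t ≤ 1) ∧
      -- DSIC: nonnegative payments, monotone allocation, individual rationality,
      -- and Myerson's payment identity
      (∀ t ∈ Set.Icc 1 H, 0 ≤ p t) ∧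
      MonotoneOn x (Set.Icc 1 H) ∧
      p 1 ≤ x 1 ∧
      (∀ s t : ℝ, 1 ≤ s → s ≤ t → t ≤ H →
        p t - p s = t * x t - s * x s - ∫ z in s..t, x z) ∧
      -- error-dependent robustness guarantee
      (∀ t ∈ Set.Icc 1 uhat, ρ (uhat / t) * t ≤ p t) ∧
      (∀ t ∈ Set.Icc uhat H, ρ (t / uhat) * t ≤ p t)) ↔
    ρ (H / uhat) + (∫ z in (1:ℝ)..uhat, ρ z / z)
      + (∫ z in (1:ℝ)..(H / uhat), ρ z / z) ≤ 1 := by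
  set g : ℝ → ℝ := fun t => ρ (predictionError uhat t)
  have hH : 1 ≤ H := huhat.1.trans huhat.2
  have hu0 : 0 < uhat := one_pos.trans_le huhat.1
  have hg : ContinuousOn g (Icc 1 H) := hρdiff.continuousOn.comp_predictionError huhat
  have hg0 : ∀ t ∈ Icc 1 H, 0 ≤ g t := fun t ht => (hρrange _ (predictionError_mem_Icc huhat ht)).1
  have hlow : ∀ t ∈ Icc 1 uhat, g t = ρ (uhat / t) := fun t ht =>
    congrArg ρ (predictionError_of_le (one_pos.trans_le ht.1) ht.2)
  have hhigh : ∀ t ∈ Icc uhat H, g t = ρ (t / uhat) := fun t ht =>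
    congrArg ρ (predictionError_of_ge hu0 ht.1)
  rw [← hhigh H ⟨huhat.2, le_rfl⟩, add_assoc,
    ← integral_comp_predictionError_div hρdiff.continuousOn huhat]
  constructor
  · rintro ⟨x, p, hfeas, -, hx, hIR, hMyerson, hpay_low, hpay_high⟩
    refine add_integral_div_le_one_of_mul_le_payment hH (hfeas H ⟨hH, le_rfl⟩).2 hx hIR hMyerson
      (fun t ht => ?_) (hg.intervalIntegrable_div_id ⟨le_rfl, hH⟩ ⟨hH, le_rfl⟩)
    rcases le_total t uhat with h | h
    · exact hlow t ⟨ht.1, h⟩ ▸ hpay_low t ⟨ht.1, h⟩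
    · exact hhigh t ⟨h, ht.2⟩ ▸ hpay_high t ⟨h, ht.2⟩
  · intro hle
    have hx := monotoneOn_guaranteeAllocation huhat hg hg0
      (hρanti.monotoneOn_comp_predictionError huhat)
      (hρmono.monotoneOn_mul_comp_predictionError huhat)
    refine ⟨guaranteeAllocation g, fun t => t * g t,
      fun t ht => ⟨guaranteeAllocation_nonneg hg0 ht, (hx ht ⟨hH, le_rfl⟩ ht.2).trans hle⟩,
      fun t ht => mul_nonneg (zero_le_one.trans ht.1) (hg0 t ht), hx, ?_,
      fun s t hs hst ht => guaranteeAllocation_payment_identity hg hs hst ht,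
      fun t ht => by simp only [hlow t ht, mul_comm, le_refl],
      fun t ht => by simp only [hhigh t ht, mul_comm, le_refl]⟩
    simp [guaranteeAllocation]

/-- Theorem 2 of the paper: a characterization of the robustness functions `ρ`
of the prediction error for which a `ρ`-robust feasible DSIC single-bidder
auction on `[1, H]` with prediction `uhat` exists. -/
theorem robustness_of_prediction_error (H : ℝ) (hH : 1 < H)
    (uhat : ℝ) (huhat : uhat ∈ Set.Icc 1 H)
    (ρ : ℝ → ℝ)
    (hρrange : ∀ η ∈ Set.Icc 1 H, ρ η ∈ Set.Icc (0 : ℝ) 1)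
    (hρdiff : DifferentiableOn ℝ ρ (Set.Icc 1 H))
    (hρanti : AntitoneOn ρ (Set.Icc 1 H))
    (hρmono : MonotoneOn (fun η => η * ρ η) (Set.Icc 1 H)) :
    (∃ x p : ℝ → ℝ,
      -- feasibility
      (∀ t ∈ Set.Icc 1 H, 0 ≤ x t ∧ x t ≤ 1) ∧
      -- DSIC: nonnegative payments, monotone allocation, individual rationality,
      -- and Myerson's payment identity
      (∀ t ∈ Set.Icc 1 H, 0 ≤ p t) ∧
      MonotoneOn x (Set.Icc 1 H) ∧
      p 1 ≤ x 1 ∧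
      (∀ s t : ℝ, 1 ≤ s → s ≤ t → t ≤ H →
        p t - p s = t * x t - s * x s - ∫ z in s..t, x z) ∧
      -- error-dependent robustness guarantee
      (∀ t ∈ Set.Icc 1 uhat, ρ (uhat / t) * t ≤ p t) ∧
      (∀ t ∈ Set.Icc uhat H, ρ (t / uhat) * t ≤ p t)) ↔
    ρ (H / uhat) + (∫ z in (1:ℝ)..uhat, ρ z / z)
      + (∫ z in (1:ℝ)..(H / uhat), ρ z / z) ≤ 1 :=
  robustness_of_prediction_error_general H uhat huhat ρ hρrange hρdiff hρanti hρmono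
end

section
/- Let ε ∈ (0,1] and define ρ : [1,∞) → ℝ by ρ(η) = 1/((π/ε + 1)·(1 + (ln η)^{1+ε})). Then: (a) ρ is non-increasing on [1,∞); (b) η ↦ η·ρ(η) is non-decreasing on [1,∞); and (c) for every H > 1 and every û ∈ [1,H], ρ(H/û) + ∫_1^û ρ(z)/z dz + ∫_1^{H/û} ρ(z)/z dz ≤ 1. -/
/-!
Substituting `t = log z` turns `∫₁ˣ ρ(z)/z dz` into `(π/ε + 1)⁻¹ ∫₀^{log x} dt/(1 + t^(1+ε))`.
The integrand is at most `1/(1 + t²)` on `[0, 1]` and at most `1/(1 + t²) + t^(-1-ε) - t^(-2)` on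
`[1, ∞)`, so each such integral is below `π/2 + 1/ε - 1 ≤ π/(2ε)`; with `ρ ≤ ρ(1) = (π/ε + 1)⁻¹`
this gives (c). For (b), `η ρ(η)` is a constant times `exp s / (1 + s^(1+ε))` at `s = log η`, whose
derivative is nonnegative by the weighted AM–GM inequality `(1 + ε) s^ε ≤ ε s^(1+ε) + 1`.
-/

open MeasureTheory intervalIntegral Real Set

variable {ε : ℝ}

lemma one_add_mul_rpow_le_one_add_rpow (hε0 : 0 ≤ ε) (hε1 : ε ≤ 1) {s : ℝ} (hs : 0 ≤ s) :
    (1 + ε) * s ^ ε ≤ 1 + s ^ (1 + ε) := by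
  have hamgm := geom_mean_le_arith_mean2_weighted (w₁ := ε / (1 + ε)) (w₂ := 1 / (1 + ε))
    (p₁ := s ^ (1 + ε)) (p₂ := 1) (by positivity) (by positivity) (by positivity) zero_le_one
    (by field_simp; ring)
  rw [← rpow_mul hs, one_rpow, mul_one, show (1 + ε) * (ε / (1 + ε)) = ε by field_simp] at hamgm
  have hweighted : (1 + ε) * s ^ ε ≤ ε * s ^ (1 + ε) + 1 :=
    calc (1 + ε) * s ^ ε ≤ (1 + ε) * (ε / (1 + ε) * s ^ (1 + ε) + 1 / (1 + ε) * 1) := by gcongr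
      _ = ε * s ^ (1 + ε) + 1 := by field_simp
  nlinarith [rpow_nonneg hs (1 + ε)]

lemma monotoneOn_exp_div_one_add_rpow (hε0 : 0 ≤ ε) (hε1 : ε ≤ 1) :
    MonotoneOn (fun s => exp s / (1 + s ^ (1 + ε))) (Ici 0) := by
  have hderiv : ∀ s : ℝ, 0 ≤ s → HasDerivAt (fun s => exp s / (1 + s ^ (1 + ε)))
      ((exp s * (1 + s ^ (1 + ε)) - exp s * ((1 + ε) * s ^ ε)) / (1 + s ^ (1 + ε)) ^ 2) s := by
    intro s hs
    have hpow := ((hasDerivAt_rpow_const (x := s) (p := 1 + ε) (.inr (by linarith))).const_add 1)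
    rw [add_sub_cancel_left] at hpow
    exact (hasDerivAt_exp s).div hpow (by positivity)
  refine monotoneOn_of_deriv_nonneg (convex_Ici 0)
    (fun s hs => (hderiv s hs).continuousAt.continuousWithinAt) ?_ ?_ <;> rw [interior_Ici]
  · exact fun s hs => (hderiv s (le_of_lt hs)).differentiableAt.differentiableWithinAt
  · intro s hs
    rw [(hderiv s (le_of_lt hs)).deriv, ← mul_sub]
    have := one_add_mul_rpow_le_one_add_rpow hε0 hε1 hs.le
    exact div_nonneg (mul_nonneg (exp_pos s).le (by linarith)) (sq_nonneg _)

noncomputable def robustnessFun (ε η : ℝ) : ℝ := 1 / ((π / ε + 1) * (1 + log η ^ (1 + ε)))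

lemma robustnessFun_one (hε : 0 < ε) : robustnessFun ε 1 = (π / ε + 1)⁻¹ := by
  simp [robustnessFun, zero_rpow (by linarith : (1 + ε) ≠ 0)]

lemma antitoneOn_robustnessFun (hε : 0 < ε) : AntitoneOn (robustnessFun ε) (Ici 1) := by
  intro a ha b _ hab
  have hla : 0 ≤ log a := log_nonneg ha
  unfold robustnessFun
  gcongr
  linarith [ha.out]

lemma monotoneOn_mul_robustnessFun (hε0 : 0 < ε) (hε1 : ε ≤ 1) :
    MonotoneOn (fun η => η * robustnessFun ε η) (Ici 1) := by
  have hrw : ∀ η ∈ Ici (1 : ℝ),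
      η * robustnessFun ε η = (π / ε + 1)⁻¹ * (exp (log η) / (1 + log η ^ (1 + ε))) := by
    intro η hη
    rw [exp_log (by linarith [hη.out]), robustnessFun, one_div, mul_inv]
    ring
  intro a ha b hb hab
  simp only [hrw a ha, hrw b hb]
  exact mul_le_mul_of_nonneg_left (monotoneOn_exp_div_one_add_rpow hε0.le hε1 (log_nonneg ha)
    (log_nonneg hb) (log_le_log (by linarith [ha.out]) hab)) (by positivity)

lemma inv_one_add_sub_inv_one_add_le {A B : ℝ} (hA : 0 < A) (hAB : A ≤ B) :
    (1 + A)⁻¹ - (1 + B)⁻¹ ≤ A⁻¹ - B⁻¹ := by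
  have hB : 0 < B := hA.trans_le hAB
  rw [inv_sub_inv (by positivity) (by positivity), inv_sub_inv hA.ne' hB.ne', add_sub_add_left_eq_sub]
  exact div_le_div_of_nonneg_left (by linarith) (by positivity) (by nlinarith)

lemma continuousOn_inv_one_add_rpow {p : ℝ} (hp : 0 ≤ p) :
    ContinuousOn (fun t : ℝ => (1 + t ^ p)⁻¹) (Ici 0) :=
  (continuous_const.add (continuous_rpow_const hp)).continuousOn.inv₀ fun _ ht =>
    (add_pos_of_pos_of_nonneg one_pos (rpow_nonneg ht p)).ne'

lemma intervalIntegrable_inv_one_add_rpow {p a b : ℝ} (hp : 0 ≤ p) (ha : 0 ≤ a) (hb : 0 ≤ b) :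
    IntervalIntegrable (fun t : ℝ => (1 + t ^ p)⁻¹) volume a b :=
  ((continuousOn_inv_one_add_rpow hp).mono fun _ ht =>
    (le_inf ha hb).trans ht.1).intervalIntegrable

lemma integral_inv_one_add_rpow_zero_one_le {p : ℝ} (hp0 : 0 ≤ p) (hp2 : p ≤ 2) :
    ∫ t in (0 : ℝ)..1, (1 + t ^ p)⁻¹ ≤ π / 4 := by
  calc ∫ t in (0 : ℝ)..1, (1 + t ^ p)⁻¹
      ≤ ∫ t in (0 : ℝ)..1, (1 + t ^ 2)⁻¹ := by
        refine integral_mono_on zero_le_one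
          (intervalIntegrable_inv_one_add_rpow hp0 le_rfl zero_le_one)
          intervalIntegrable_inv_one_add_sq fun t ⟨ht0, ht1⟩ => ?_
        have hsq : t ^ (2 : ℝ) ≤ t ^ p := rpow_le_rpow_of_exponent_ge' ht0 ht1 hp0 hp2
        rw [rpow_two] at hsq
        gcongr
    _ = π / 4 := by simp [integral_inv_one_add_sq]

lemma inv_one_add_rpow_le_of_one_le {p t : ℝ} (hp : p ≤ 2) (ht : 1 ≤ t) :
    (1 + t ^ p)⁻¹ ≤ (1 + t ^ 2)⁻¹ + t ^ (-p) - t ^ (-2 : ℝ) := by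
  have hle : t ^ p ≤ t ^ 2 := by
    rw [← rpow_two]
    exact rpow_le_rpow_of_exponent_le ht hp
  have := inv_one_add_sub_inv_one_add_le (rpow_pos_of_pos (by linarith) p) hle
  rw [rpow_neg (by linarith), rpow_neg (by linarith), rpow_two]
  linarith

lemma integral_inv_one_add_rpow_one_le (hε0 : 0 < ε) (hε1 : ε ≤ 1) {L : ℝ} (hL : 1 ≤ L) :
    ∫ t in (1 : ℝ)..L, (1 + t ^ (1 + ε))⁻¹ ≤ π / 4 + 1 / ε - 1 := by
  have h0 : (0 : ℝ) ∉ uIcc 1 L := by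
    rw [uIcc_of_le hL]
    exact notMem_Icc_of_lt zero_lt_one
  have hpow (r : ℝ) : IntervalIntegrable (fun t : ℝ => t ^ r) volume 1 L :=
    intervalIntegrable_rpow (.inr h0)
  have hmaj := (intervalIntegrable_inv_one_add_sq (a := 1) (b := L)).add (hpow (-(1 + ε)))
  calc ∫ t in (1 : ℝ)..L, (1 + t ^ (1 + ε))⁻¹
      ≤ ∫ t in (1 : ℝ)..L, ((1 + t ^ 2)⁻¹ + t ^ (-(1 + ε)) - t ^ (-2 : ℝ)) :=
        integral_mono_on hL (intervalIntegrable_inv_one_add_rpow (by linarith) zero_le_one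
          (zero_le_one.trans hL)) (hmaj.sub (hpow _))
          fun t ht => inv_one_add_rpow_le_of_one_le (by linarith) ht.1
    _ = arctan L - π / 4 + (1 - L ^ (-ε)) / ε + L ^ (-1 : ℝ) - 1 := by
        rw [integral_sub hmaj (hpow _), integral_add intervalIntegrable_inv_one_add_sq (hpow _),
          integral_inv_one_add_sq, integral_rpow (.inr ⟨by linarith, h0⟩),
          integral_rpow (.inr ⟨by norm_num, h0⟩), arctan_one, one_rpow, one_rpow,
          show -(1 + ε) + 1 = -ε by ring, show (-2 : ℝ) + 1 = -1 by norm_num]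
        field_simp
        ring
    _ ≤ π / 4 + 1 / ε - 1 := by
        have harctan : arctan L < π / 2 := arctan_lt_pi_div_two L
        have hLε : L ^ (-1 : ℝ) ≤ L ^ (-ε) := rpow_le_rpow_of_exponent_le hL (by linarith)
        have hdiv : L ^ (-ε) ≤ L ^ (-ε) / ε := le_div_self (by positivity) hε0 hε1
        rw [sub_div, one_div]
        linarith

lemma integral_inv_one_add_rpow_le (hε0 : 0 < ε) (hε1 : ε ≤ 1) {L : ℝ} (hL : 0 ≤ L) :
    ∫ t in (0 : ℝ)..L, (1 + t ^ (1 + ε))⁻¹ ≤ π / (2 * ε) := by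
  have hp : 0 ≤ 1 + ε := by linarith
  have hM : 1 ≤ max L 1 := le_max_right L 1
  have hconst : π / 2 + 1 / ε - 1 ≤ π / (2 * ε) := by
    have : π / (2 * ε) - (π / 2 + 1 / ε - 1) = (π / 2 - 1) * (1 / ε - 1) := by
      field_simp
      ring
    nlinarith [pi_gt_three, one_le_one_div hε0 hε1]
  calc ∫ t in (0 : ℝ)..L, (1 + t ^ (1 + ε))⁻¹
      ≤ ∫ t in (0 : ℝ)..max L 1, (1 + t ^ (1 + ε))⁻¹ :=
        integral_mono_interval le_rfl hL (le_max_left L 1)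
          (ae_restrict_of_forall_mem measurableSet_Ioc fun t ht =>
            inv_nonneg.2 (add_nonneg zero_le_one (rpow_nonneg ht.1.le _)))
          (intervalIntegrable_inv_one_add_rpow hp le_rfl (by linarith))
    _ = (∫ t in (0 : ℝ)..1, (1 + t ^ (1 + ε))⁻¹) + ∫ t in (1 : ℝ)..max L 1, (1 + t ^ (1 + ε))⁻¹ :=
        (integral_add_adjacent_intervals
          (intervalIntegrable_inv_one_add_rpow hp le_rfl zero_le_one)
          (intervalIntegrable_inv_one_add_rpow hp zero_le_one (by linarith))).symm
    _ ≤ π / 4 + (π / 4 + 1 / ε - 1) :=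
        add_le_add (integral_inv_one_add_rpow_zero_one_le hp (by linarith))
          (integral_inv_one_add_rpow_one_le hε0 hε1 hM)
    _ ≤ π / (2 * ε) := by linarith

lemma integral_robustnessFun_div_eq (hε : 0 < ε) {x : ℝ} (hx : 1 ≤ x) :
    ∫ z in (1 : ℝ)..x, robustnessFun ε z / z
      = (π / ε + 1)⁻¹ * ∫ t in (0 : ℝ)..log x, (1 + t ^ (1 + ε))⁻¹ := by
  have hmem : ∀ z ∈ uIcc 1 x, 1 ≤ z := fun z hz => by
    rw [uIcc_of_le hx] at hz
    exact hz.1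
  have hpos : ∀ z ∈ uIcc 1 x, 0 < z := fun z hz => by linarith [hmem z hz]
  have hsubst := integral_comp_mul_deriv' (f := log) (f' := fun z => z⁻¹)
    (g := fun t => (1 + t ^ (1 + ε))⁻¹) (fun z hz => hasDerivAt_log (hpos z hz).ne')
    (continuousOn_inv₀.mono fun z hz => (hpos z hz).ne')
    ((continuousOn_inv_one_add_rpow (by linarith)).mono <| by
      rintro _ ⟨z, hz, rfl⟩
      exact log_nonneg (hmem z hz))
  rw [log_one] at hsubst
  rw [← hsubst, ← intervalIntegral.integral_const_mul]
  refine integral_congr fun z _ => ?_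
  simp only [robustnessFun, Function.comp, mul_inv, div_eq_mul_inv]
  ring

lemma integral_robustnessFun_div_le (hε0 : 0 < ε) (hε1 : ε ≤ 1) {x : ℝ} (hx : 1 ≤ x) :
    ∫ z in (1 : ℝ)..x, robustnessFun ε z / z ≤ (π / ε + 1)⁻¹ * (π / (2 * ε)) := by
  rw [integral_robustnessFun_div_eq hε0 hx]
  exact mul_le_mul_of_nonneg_left (integral_inv_one_add_rpow_le hε0 hε1 (log_nonneg hx))
    (by positivity)

/-- The first robustness function of Corollary 1 of the paper:
`ρ(η) = 1/((π/ε + 1)(1 + ln^{1+ε} η))` is non-increasing, `η·ρ(η)` is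
non-decreasing, and `ρ` satisfies the robustness condition of Theorem 2
for every `H > 1` and every prediction `uhat ∈ [1,H]`. -/
theorem first_robustness_function (ε : ℝ) (hε0 : 0 < ε) (hε1 : ε ≤ 1) :
    let ρ : ℝ → ℝ := fun η => 1 / ((π / ε + 1) * (1 + Real.log η ^ (1 + ε)))
    AntitoneOn ρ (Set.Ici 1) ∧
    MonotoneOn (fun η => η * ρ η) (Set.Ici 1) ∧
    (∀ H : ℝ, 1 < H → ∀ uhat ∈ Set.Icc (1:ℝ) H,
      ρ (H / uhat) + (∫ z in (1:ℝ)..uhat, ρ z / z)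
        + (∫ z in (1:ℝ)..(H / uhat), ρ z / z) ≤ 1) := by
  refine ⟨antitoneOn_robustnessFun hε0, monotoneOn_mul_robustnessFun hε0 hε1,
    fun H _ uhat ⟨hu1, huH⟩ => ?_⟩
  have hHu : 1 ≤ H / uhat := (one_le_div (by linarith)).mpr huH
  have hρ : robustnessFun ε (H / uhat) ≤ (π / ε + 1)⁻¹ :=
    robustnessFun_one hε0 ▸ antitoneOn_robustnessFun hε0 (mem_Ici.2 le_rfl) hHu hHu
  have htotal : (π / ε + 1)⁻¹ * (1 + π / (2 * ε) + π / (2 * ε)) = 1 := by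
    field_simp
    ring
  show robustnessFun ε (H / uhat) + (∫ z in (1 : ℝ)..uhat, robustnessFun ε z / z)
    + (∫ z in (1 : ℝ)..(H / uhat), robustnessFun ε z / z) ≤ 1
  linarith [integral_robustnessFun_div_le hε0 hε1 hu1, integral_robustnessFun_div_le hε0 hε1 hHu]
end

section
/- Let H > 1 and define ρ : [1,H] → ℝ by ρ(η) = 1/((1 + 2·ln(1 + ln H))·(1 + ln η)). Then: (a) ρ is non-increasing on [1,H]; (b) η ↦ η·ρ(η) is non-decreasing on [1,H]; and (c) for every û ∈ [1,H], ρ(H/û) + ∫_1^û ρ(z)/z dz + ∫_1^{H/û} ρ(z)/z dz ≤ 1. -/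
open intervalIntegral Real

/-! With `C = 1 + 2 ln(1 + ln H)` we have `ρ = 1 / (C (1 + ln η))`. Monotonicity of `ρ` and of
`η ρ(η)` on `[1, ∞)` are elementary. Since `ln(1 + ln z) / C` is an antiderivative of `ρ(z) / z`,
the two integrals in (c) equal `ln(1 + a) / C` and `ln(1 + b) / C` with `a = ln û`, `b = ln (H / û)`
non-negative and `a + b = ln H`; then `(1 + a)(1 + b) ≤ (1 + ln H)²` bounds their sum by
`2 ln(1 + ln H) / C`, while `ρ(H / û) ≤ 1 / C`, and the total is at most `C / C = 1`. -/

section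

variable {C : ℝ}

lemma antitoneOn_one_div_mul_one_add_log (hC : 0 < C) :
    AntitoneOn (fun x => 1 / (C * (1 + log x))) (Set.Ici 1) := by
  intro a (ha : 1 ≤ a) b _ hab
  have hlog_a := log_nonneg ha
  have hlog_le : log a ≤ log b := log_le_log (by linarith) hab
  exact one_div_le_one_div_of_le (by positivity) (by gcongr)

lemma mul_one_add_log_le_mul_one_add_log {a b : ℝ} (ha : 1 ≤ a) (hab : a ≤ b) :
    a * (1 + log b) ≤ b * (1 + log a) := by
  have ha0 : 0 < a := by linarith
  have hb0 : 0 < b := by linarith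
  have hlog_a := log_nonneg ha
  have hlog_div : a * (log b - log a) ≤ b - a := by
    rw [← log_div (by positivity) ha0.ne']
    calc a * log (b / a) ≤ a * (b / a - 1) :=
          mul_le_mul_of_nonneg_left (log_le_sub_one_of_pos (by positivity)) ha0.le
      _ = b - a := by field_simp
  nlinarith [mul_le_mul_of_nonneg_right hab hlog_a]

lemma monotoneOn_mul_one_div_mul_one_add_log (hC : 0 < C) :
    MonotoneOn (fun x => x * (1 / (C * (1 + log x)))) (Set.Ici 1) := by
  intro a (ha : 1 ≤ a) b (hb : 1 ≤ b) hab
  have hlog_a := log_nonneg ha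
  have hlog_b := log_nonneg hb
  simp only [mul_one_div]
  rw [div_le_div_iff₀ (by positivity) (by positivity)]
  nlinarith [mul_one_add_log_le_mul_one_add_log ha hab]

lemma integral_one_div_mul_one_add_log_div (hC : 0 < C) {u : ℝ} (hu : 1 ≤ u) :
    ∫ z in (1:ℝ)..u, 1 / (C * (1 + log z)) / z = log (1 + log u) / C := by
  have hmem {x : ℝ} (hx : x ∈ Set.uIcc 1 u) : 1 ≤ x := (Set.uIcc_of_le hu ▸ hx).1
  have hderiv : ∀ x ∈ Set.uIcc 1 u,
      HasDerivAt (fun z => log (1 + log z) / C) (1 / (C * (1 + log x)) / x) x := by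
    intro x hx
    have hlog := log_nonneg (hmem hx)
    have hx0 : x ≠ 0 := by linarith [hmem hx]
    refine (((hasDerivAt_log hx0).const_add 1).log (by positivity)).div_const C |>.congr_deriv ?_
    field_simp
  have hcont : ContinuousOn (fun z => 1 / (C * (1 + log z)) / z) (Set.uIcc 1 u) := by
    intro x hx
    have hx1 := hmem hx
    have hlog := log_nonneg hx1
    exact ContinuousAt.continuousWithinAt (by fun_prop (disch := positivity))
  rw [integral_eq_sub_of_hasDerivAt hderiv hcont.intervalIntegrable]
  simp

end

lemma log_one_add_add_log_one_add_le {a b : ℝ} (ha : 0 ≤ a) (hb : 0 ≤ b) :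
    log (1 + a) + log (1 + b) ≤ 2 * log (1 + (a + b)) := by
  rw [← log_mul (by positivity) (by positivity), two_mul, ← log_mul (by positivity) (by positivity)]
  exact log_le_log (by positivity) (by nlinarith)

theorem second_robustness_function_general (H : ℝ) :
    let ρ : ℝ → ℝ := fun η =>
      1 / ((1 + 2 * Real.log (1 + Real.log H)) * (1 + Real.log η))
    AntitoneOn ρ (Set.Icc 1 H) ∧
    MonotoneOn (fun η => η * ρ η) (Set.Icc 1 H) ∧
    (∀ uhat ∈ Set.Icc (1:ℝ) H,
      ρ (H / uhat) + (∫ z in (1:ℝ)..uhat, ρ z / z)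
        + (∫ z in (1:ℝ)..(H / uhat), ρ z / z) ≤ 1) := by
  intro ρ
  set C := 1 + 2 * log (1 + log H)
  rcases lt_or_ge H 1 with hH | hH
  · rw [Set.Icc_eq_empty_of_lt hH]
    exact ⟨Set.subsingleton_empty.antitoneOn _, Set.subsingleton_empty.monotoneOn _, by simp⟩
  have hlog_H := log_nonneg hH
  have hC : 0 < C := by have := log_nonneg (by linarith : (1:ℝ) ≤ 1 + log H); linarith
  refine ⟨(antitoneOn_one_div_mul_one_add_log hC).mono Set.Icc_subset_Ici_self,
    (monotoneOn_mul_one_div_mul_one_add_log hC).mono Set.Icc_subset_Ici_self, ?_⟩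
  rintro u ⟨hu, huH⟩
  have hu0 : 0 < u := by linarith
  have hHu : 1 ≤ H / u := (one_le_div hu0).mpr huH
  have hlog_sum : log u + log (H / u) = log H := by
    rw [← log_mul hu0.ne' (by positivity), mul_div_cancel₀ _ hu0.ne']
  have hρ : ρ (H / u) ≤ 1 / C :=
    antitoneOn_one_div_mul_one_add_log hC (le_refl (1:ℝ)) hHu hHu |>.trans_eq (by simp)
  have hlogs := log_one_add_add_log_one_add_le (log_nonneg hu) (log_nonneg hHu)
  rw [integral_one_div_mul_one_add_log_div hC hu, integral_one_div_mul_one_add_log_div hC hHu]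
  calc ρ (H / u) + log (1 + log u) / C + log (1 + log (H / u)) / C
      ≤ 1 / C + 2 * log (1 + log H) / C := by
        rw [← hlog_sum, add_assoc, ← add_div]; gcongr
    _ = 1 := by rw [← add_div, div_self hC.ne']

/-- The second robustness function of Corollary 1 of the paper:
`ρ(η) = 1/((1 + 2 ln(1 + ln H))(1 + ln η))` is non-increasing on `[1,H]`,
`η·ρ(η)` is non-decreasing on `[1,H]`, and `ρ` satisfies the robustness
condition of Theorem 2 for every prediction `uhat ∈ [1,H]`. -/
theorem second_robustness_function (H : ℝ) (hH : 1 < H) :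
    let ρ : ℝ → ℝ := fun η =>
      1 / ((1 + 2 * Real.log (1 + Real.log H)) * (1 + Real.log η))
    AntitoneOn ρ (Set.Icc 1 H) ∧
    MonotoneOn (fun η => η * ρ η) (Set.Icc 1 H) ∧
    (∀ uhat ∈ Set.Icc (1:ℝ) H,
      ρ (H / uhat) + (∫ z in (1:ℝ)..uhat, ρ z / z)
        + (∫ z in (1:ℝ)..(H / uhat), ρ z / z) ≤ 1) :=
  second_robustness_function_general H
end

section
/- Let H > 1, let ε ∈ (0,1), and define ρ : [1,H] → ℝ by ρ(η) = (1−ε)/(2·(1 + ln H)^{1−ε}·(1 + ln η)^{ε}). Then: (a) ρ is non-increasing on [1,H]; (b) η ↦ η·ρ(η) is non-decreasing on [1,H]; and (c) for every û ∈ [1,H], ρ(H/û) + ∫_1^û ρ(z)/z dz + ∫_1^{H/û} ρ(z)/z dz ≤ 1. -/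
open MeasureTheory intervalIntegral Real

/-!
Write `ρ η = (1 - ε) / (K * (1 + log η) ^ ε)` with `K = 2 (1 + log H) ^ (1 - ε)`.
Monotonicity of `η ρ(η)` comes from `ln t ≤ t - 1` together with `r ^ ε ≤ r` for `r ≥ 1`.
The function `ρ z / z` has the antiderivative `(1 + log z) ^ (1 - ε) / K`, so each integral is at
most `((1 + log H) ^ (1 - ε) - 1) / K`, while `ρ (H / û) ≤ ρ 1 = (1 - ε) / K`; the three terms add
up to at most `(2 (1 + log H) ^ (1 - ε) - 1 - ε) / K ≤ 1`.
-/

lemma one_add_log_pos {x : ℝ} (hx : 1 ≤ x) : 0 < 1 + log x := by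
  linarith [log_nonneg hx]

lemma antitoneOn_div_mul_one_add_log_rpow {a K ε : ℝ} (ha : 0 ≤ a) (hK : 0 < K) (hε : 0 ≤ ε) :
    AntitoneOn (fun η => a / (K * (1 + log η) ^ ε)) (Set.Ici 1) := by
  intro x hx y _ hxy
  have := one_add_log_pos hx
  have : log x ≤ log y := log_le_log (by linarith [hx.out]) hxy
  dsimp only
  gcongr

lemma mul_one_add_log_rpow_le_mul {x y ε : ℝ} (hx : 1 ≤ x) (hxy : x ≤ y) (hε : ε ≤ 1) :
    x * (1 + log y) ^ ε ≤ y * (1 + log x) ^ ε := by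
  have hx0 : 0 < x := by linarith
  have hy0 : 0 < y := by linarith
  have hLx := one_add_log_pos hx
  have hLy := one_add_log_pos (hx.trans hxy)
  have hlog : 1 + log y ≤ (1 + log x) * (y / x) := by
    have h := log_le_sub_one_of_pos (by positivity : 0 < y / x)
    rw [log_div (by positivity) hx0.ne'] at h
    nlinarith [mul_nonneg (log_nonneg hx) (sub_nonneg.2 ((one_le_div hx0).2 hxy))]
  have hr : 1 ≤ (1 + log y) / (1 + log x) := by
    rw [one_le_div hLx]; linarith [log_le_log hx0 hxy]
  have key : ((1 + log y) / (1 + log x)) ^ ε ≤ y / x :=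
    calc ((1 + log y) / (1 + log x)) ^ ε ≤ ((1 + log y) / (1 + log x)) ^ (1 : ℝ) :=
          rpow_le_rpow_of_exponent_le hr hε
      _ ≤ y / x := by rw [rpow_one, div_le_iff₀ hLx]; linarith
  rw [div_rpow (by linarith) hLx.le, div_le_div_iff₀ (by positivity) hx0] at key
  linarith

lemma monotoneOn_mul_div_mul_one_add_log_rpow {a K ε : ℝ} (ha : 0 ≤ a) (hK : 0 < K)
    (hε : ε ≤ 1) :
    MonotoneOn (fun η => η * (a / (K * (1 + log η) ^ ε))) (Set.Ici 1) := by
  intro x hx y hy hxy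
  have := one_add_log_pos hx
  have := one_add_log_pos hy
  dsimp only
  rw [mul_div_assoc', mul_div_assoc', div_le_div_iff₀ (by positivity) (by positivity)]
  linear_combination (a * K) * mul_one_add_log_rpow_le_mul hx hxy hε

lemma integral_div_mul_one_add_log_rpow_div (ε : ℝ) {K u : ℝ} (hK : K ≠ 0) (hu : 1 ≤ u) :
    ∫ z in (1 : ℝ)..u, (1 - ε) / (K * (1 + log z) ^ ε) / z = ((1 + log u) ^ (1 - ε) - 1) / K := by
  have hpos : ∀ x ∈ Set.uIcc 1 u, 0 < x ∧ 0 < 1 + log x := fun x hx => by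
    rw [Set.uIcc_of_le hu] at hx
    exact ⟨by linarith [hx.1], one_add_log_pos hx.1⟩
  have hderiv : ∀ x ∈ Set.uIcc 1 u, HasDerivAt (fun z => (1 + log z) ^ (1 - ε) / K)
      ((1 - ε) / (K * (1 + log x) ^ ε) / x) x := fun x hx => by
    obtain ⟨hx0, hL⟩ := hpos x hx
    refine ((((hasDerivAt_log hx0.ne').const_add 1).rpow_const (p := 1 - ε)
      (Or.inl hL.ne')).div_const K).congr_deriv ?_
    rw [sub_sub_cancel_left, rpow_neg hL.le]
    field_simp
  have hcont : ContinuousOn (fun z => (1 - ε) / (K * (1 + log z) ^ ε) / z) (Set.uIcc 1 u) := by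
    intro x hx
    obtain ⟨hx0, hL⟩ := hpos x hx
    have : K * (1 + log x) ^ ε ≠ 0 := by positivity
    exact ContinuousAt.continuousWithinAt <| by
      fun_prop (disch := first | assumption | exact hx0.ne' | exact Or.inl hL.ne')
  rw [integral_eq_sub_of_hasDerivAt hderiv hcont.intervalIntegrable]
  simp only [log_one, add_zero, one_rpow]
  ring

/-- The third robustness function of Corollary 1 of the paper:
`ρ(η) = (1-ε)/(2 (1 + ln H)^{1-ε} (1 + ln η)^ε)` is non-increasing on `[1,H]`,
`η·ρ(η)` is non-decreasing on `[1,H]`, and `ρ` satisfies the robustness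
condition of Theorem 2 for every prediction `uhat ∈ [1,H]`. -/
theorem third_robustness_function (H : ℝ) (hH : 1 < H)
    (ε : ℝ) (hε0 : 0 < ε) (hε1 : ε < 1) :
    let ρ : ℝ → ℝ := fun η =>
      (1 - ε) / (2 * (1 + Real.log H) ^ (1 - ε) * (1 + Real.log η) ^ ε)
    AntitoneOn ρ (Set.Icc 1 H) ∧
    MonotoneOn (fun η => η * ρ η) (Set.Icc 1 H) ∧
    (∀ uhat ∈ Set.Icc (1:ℝ) H,
      ρ (H / uhat) + (∫ z in (1:ℝ)..uhat, ρ z / z)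
        + (∫ z in (1:ℝ)..(H / uhat), ρ z / z) ≤ 1) := by
  intro ρ
  set K := 2 * (1 + log H) ^ (1 - ε)
  have hK : 0 < K := by have := one_add_log_pos hH.le; positivity
  have hanti : AntitoneOn ρ (Set.Icc 1 H) :=
    (antitoneOn_div_mul_one_add_log_rpow (by linarith) hK hε0.le).mono Set.Icc_subset_Ici_self
  refine ⟨hanti, (monotoneOn_mul_div_mul_one_add_log_rpow (by linarith) hK hε1.le).mono
    Set.Icc_subset_Ici_self, fun u ⟨hu1, huH⟩ => ?_⟩
  have hq : H / u ∈ Set.Icc 1 H :=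
    ⟨(one_le_div (by linarith)).2 huH, div_le_self (by linarith) hu1⟩
  have hρq : ρ (H / u) ≤ (1 - ε) / K := by
    simpa [ρ] using hanti ⟨le_rfl, hH.le⟩ hq hq.1
  have hpow_le : ∀ x ∈ Set.Icc 1 H, (1 + log x) ^ (1 - ε) ≤ (1 + log H) ^ (1 - ε) :=
    fun x hx => rpow_le_rpow (one_add_log_pos hx.1).le
      (by gcongr; exacts [by linarith [hx.1], hx.2]) (by linarith)
  rw [integral_div_mul_one_add_log_rpow_div ε hK.ne' hu1,
    integral_div_mul_one_add_log_rpow_div ε hK.ne' hq.1]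
  calc ρ (H / u) + ((1 + log u) ^ (1 - ε) - 1) / K + ((1 + log (H / u)) ^ (1 - ε) - 1) / K
      ≤ ((1 - ε) + ((1 + log u) ^ (1 - ε) - 1) + ((1 + log (H / u)) ^ (1 - ε) - 1)) / K := by
        rw [add_div, add_div]; gcongr
    _ ≤ 1 := by
        rw [div_le_one hK]
        linarith [hpow_le u ⟨hu1, huH⟩, hpow_le _ hq]
end

section
/- Let ε ∈ (0,1] and define ρ : [1,∞) → ℝ by ρ(η) = 1/((π/ε + 1)·(1 + (ln η)^{1+ε})). Then for all real numbers a ≥ 1 and b ≥ 1, ρ(b) + ∫_1^a ρ(z)/z dz + ∫_1^b ρ(z)/z dz ≤ 1. -/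
/-!
Substituting `z = eᵗ` turns `∫_1^x ρ(z)/z dz` into `(π/ε + 1)⁻¹ ∫_0^{log x} dt / (1 + t^(1+ε))`,
and `ρ(b) ≤ (π/ε + 1)⁻¹`, so it suffices that `∫_0^T dt / (1 + t^(1+ε)) ≤ π/(2ε)` for all `T`.
The inversion `t = 1/u` folds `[1, T]` onto `[1/T, 1]`, bounding this integral by
`∫_0^1 (1 + u^(ε-1)) / (1 + u^(1+ε)) du`. Pointwise on `(0, 1]` the integrand is at most
`2 u^(ε-1) / (1 + u^(2ε))`, the derivative of `(2/ε) arctan (u^ε)`, whose integral is `π/(2ε)`.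
-/

open MeasureTheory intervalIntegral Real Set

theorem integral_comp_log_div {f : ℝ → ℝ} {a b : ℝ} (ha : 0 < a) (hb : 0 < b)
    (hf : ContinuousOn f (uIcc (log a) (log b))) :
    ∫ z in a..b, f (log z) / z = ∫ t in log a..log b, f t := by
  have hpos : ∀ z ∈ uIcc a b, 0 < z := fun z hz => (lt_min ha hb).trans_le hz.1
  rw [← integral_comp_mul_deriv' (fun z hz => hasDerivAt_log (hpos z hz).ne')
    (continuousOn_inv₀.mono fun z hz => (hpos z hz).ne') (by rwa [image_log_uIcc ha hb])]
  rfl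

theorem continuousOn_one_div_one_add_rpow {p : ℝ} (hp : 0 ≤ p) :
    ContinuousOn (fun t : ℝ => 1 / (1 + t ^ p)) (Ici 0) :=
  continuousOn_const.div (continuous_const.add (continuous_rpow_const hp)).continuousOn
    fun t ht => by have := rpow_nonneg (mem_Ici.1 ht) p; positivity

theorem intervalIntegrable_rpow_sub_one_div_one_add_rpow {ε q x : ℝ} (hε : 0 < ε) (hx : 0 ≤ x) :
    IntervalIntegrable (fun u : ℝ => u ^ (ε - 1) / (1 + u ^ q)) volume 0 x := by
  refine (intervalIntegrable_rpow' (r := ε - 1) (by linarith)).mono_fun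
    (by fun_prop : Measurable _).aestronglyMeasurable ?_
  filter_upwards [self_mem_ae_restrict measurableSet_uIoc] with u hu
  rw [uIoc_of_le hx] at hu
  have hq : 0 ≤ u ^ q := rpow_nonneg hu.1.le q
  rw [norm_div, norm_of_nonneg (by positivity : 0 ≤ 1 + u ^ q)]
  exact div_le_self (norm_nonneg _) (by linarith)

theorem one_add_rpow_div_le {ε u : ℝ} (hε0 : 0 ≤ ε) (hε1 : ε ≤ 1) (hu0 : 0 < u) (hu1 : u ≤ 1) :
    (1 + u ^ (ε - 1)) / (1 + u ^ (1 + ε)) ≤ 2 * (u ^ (ε - 1) / (1 + u ^ (2 * ε))) := by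
  have hA : 1 ≤ u ^ (ε - 1) := one_le_rpow_of_pos_of_le_one_of_nonpos hu0 hu1 (by linarith)
  have hD : u ^ (2 * ε) ≤ 1 := rpow_le_one hu0.le hu1 (by linarith)
  have hB : 0 ≤ u ^ (1 + ε) := rpow_nonneg hu0.le _
  have hAB : u ^ (2 * ε) = u ^ (ε - 1) * u ^ (1 + ε) := by
    rw [← rpow_add hu0]; ring_nf
  rw [mul_div_assoc', div_le_div_iff₀ (by positivity) (by positivity)]
  rw [hAB] at hD ⊢
  -- with `A = u^(ε-1)` and `B = u^(1+ε)`, the difference of the two sides is `(A - 1) (1 - A B)`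
  nlinarith [mul_nonneg (sub_nonneg.2 hA) (sub_nonneg.2 hD)]

theorem integral_rpow_sub_one_div_one_add_rpow_two_mul {ε x : ℝ} (hε : 0 < ε) (hx : 0 ≤ x) :
    ∫ u in (0:ℝ)..x, u ^ (ε - 1) / (1 + u ^ (2 * ε)) = arctan (x ^ ε) / ε := by
  have hderiv : ∀ u ∈ Ioo 0 x, HasDerivAt (fun u : ℝ => arctan (u ^ ε) / ε)
      (u ^ (ε - 1) / (1 + u ^ (2 * ε))) u := by
    intro u hu
    have hsq : (u ^ ε) ^ 2 = u ^ (2 * ε) := by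
      rw [← rpow_natCast, ← rpow_mul hu.1.le]; ring_nf
    refine ((hasDerivAt_rpow_const (Or.inl hu.1.ne')).arctan.div_const ε).congr_deriv ?_
    rw [hsq]
    field_simp
  rw [integral_eq_sub_of_hasDerivAt_of_le hx
    ((continuous_arctan.comp (continuous_rpow_const hε.le)).div_const ε).continuousOn hderiv
    (intervalIntegrable_rpow_sub_one_div_one_add_rpow hε hx)]
  simp [zero_rpow hε.ne']

theorem integral_one_div_one_add_rpow_eq_integral_inv {p a b : ℝ} (hp : 0 ≤ p) (ha : 0 < a)
    (hb : 0 < b) :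
    ∫ t in a..b, 1 / (1 + t ^ p) = ∫ u in b⁻¹..a⁻¹, u ^ (p - 2) / (1 + u ^ p) := by
  have hpos : ∀ u ∈ uIcc b⁻¹ a⁻¹, 0 < u :=
    fun u hu => (lt_min (inv_pos.2 hb) (inv_pos.2 ha)).trans_le hu.1
  have hsubst := integral_comp_mul_deriv' (fun u hu => hasDerivAt_inv (hpos u hu).ne')
    ((continuousOn_pow 2).inv₀ fun u hu => pow_ne_zero 2 (hpos u hu).ne').neg
    ((continuousOn_one_div_one_add_rpow hp).mono
      (image_subset_iff.2 fun u hu => (inv_pos.2 (hpos u hu)).le))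
  rw [inv_inv, inv_inv] at hsubst
  have hintegrand : EqOn (fun u => ((fun t : ℝ => 1 / (1 + t ^ p)) ∘ fun u => u⁻¹) u * -(u ^ 2)⁻¹)
      (fun u => -(u ^ (p - 2) / (1 + u ^ p))) (uIcc b⁻¹ a⁻¹) := by
    intro u hu
    have hu0 := hpos u hu
    have : 0 < u ^ p := rpow_pos_of_pos hu0 p
    simp only [Function.comp_apply, inv_rpow hu0.le, rpow_sub hu0, rpow_two]
    field_simp
    ring
  rw [integral_congr hintegrand, intervalIntegral.integral_neg, integral_symm a b] at hsubst
  exact (neg_inj.1 hsubst).symm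

theorem integral_one_div_one_add_rpow_le_of_one_le {ε T : ℝ} (hε0 : 0 < ε) (hε1 : ε ≤ 1)
    (hT : 1 ≤ T) :
    ∫ t in (0:ℝ)..T, 1 / (1 + t ^ (1 + ε)) ≤ π / (2 * ε) := by
  have hp : 0 ≤ 1 + ε := by linarith
  have hg : ∀ c d : ℝ, 0 ≤ c → 0 ≤ d →
      IntervalIntegrable (fun t : ℝ => 1 / (1 + t ^ (1 + ε))) volume c d := fun c d hc hd =>
    ((continuousOn_one_div_one_add_rpow hp).mono fun t ht => (le_min hc hd).trans ht.1
      ).intervalIntegrable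
  have hh := intervalIntegrable_rpow_sub_one_div_one_add_rpow (q := 1 + ε) hε0 zero_le_one
  have hfold := integral_one_div_one_add_rpow_eq_integral_inv hp one_pos (by linarith : 0 < T)
  rw [inv_one, show 1 + ε - 2 = ε - 1 by ring] at hfold
  calc ∫ t in (0:ℝ)..T, 1 / (1 + t ^ (1 + ε))
      = (∫ t in (0:ℝ)..1, 1 / (1 + t ^ (1 + ε))) + ∫ t in (1:ℝ)..T, 1 / (1 + t ^ (1 + ε)) :=
        (integral_add_adjacent_intervals (hg 0 1 le_rfl zero_le_one)
          (hg 1 T zero_le_one (by linarith))).symm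
    _ ≤ (∫ t in (0:ℝ)..1, 1 / (1 + t ^ (1 + ε))) +
          ∫ u in (0:ℝ)..1, u ^ (ε - 1) / (1 + u ^ (1 + ε)) := by
        rw [hfold]
        gcongr
        refine integral_mono_interval (inv_nonneg.2 (by linarith)) (inv_le_one_of_one_le₀ hT)
          le_rfl ?_ hh
        filter_upwards [ae_restrict_mem measurableSet_Ioc] with u hu
        have := rpow_nonneg hu.1.le (1 + ε)
        have := rpow_nonneg hu.1.le (ε - 1)
        positivity
    _ = ∫ u in (0:ℝ)..1, 1 / (1 + u ^ (1 + ε)) + u ^ (ε - 1) / (1 + u ^ (1 + ε)) :=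
        (integral_add (hg 0 1 le_rfl zero_le_one) hh).symm
    _ ≤ ∫ u in (0:ℝ)..1, 2 * (u ^ (ε - 1) / (1 + u ^ (2 * ε))) := by
        refine integral_mono_on_of_le_Ioo zero_le_one ((hg 0 1 le_rfl zero_le_one).add hh)
          ((intervalIntegrable_rpow_sub_one_div_one_add_rpow hε0 zero_le_one).const_mul 2)
          fun u hu => ?_
        simpa only [add_div] using one_add_rpow_div_le hε0.le hε1 hu.1 hu.2.le
    _ = π / (2 * ε) := by
        rw [intervalIntegral.integral_const_mul,
          integral_rpow_sub_one_div_one_add_rpow_two_mul hε0 zero_le_one, one_rpow, arctan_one]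
        field_simp
        ring

theorem integral_one_div_one_add_rpow_le {ε T : ℝ} (hε0 : 0 < ε) (hε1 : ε ≤ 1) (hT : 0 ≤ T) :
    ∫ t in (0:ℝ)..T, 1 / (1 + t ^ (1 + ε)) ≤ π / (2 * ε) := by
  have hp : 0 ≤ 1 + ε := by linarith
  refine le_trans ?_ (integral_one_div_one_add_rpow_le_of_one_le hε0 hε1 (le_max_right T 1))
  refine integral_mono_interval le_rfl hT (le_max_left T 1) ?_
    ((continuousOn_one_div_one_add_rpow hp).mono fun t ht => (le_min le_rfl
      (hT.trans (le_max_left T 1))).trans ht.1).intervalIntegrable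
  filter_upwards [ae_restrict_mem measurableSet_Ioc] with t ht
  have := rpow_nonneg ht.1.le (1 + ε)
  positivity

/-- The uniform inequality behind the first robustness function of Corollary 1:
for `ρ(η) = 1/((π/ε + 1)(1 + ln^{1+ε} η))` and all `a, b ≥ 1`,
`ρ(b) + ∫_1^a ρ(z)/z dz + ∫_1^b ρ(z)/z dz ≤ 1`. -/
theorem first_robustness_function_uniform (ε : ℝ) (hε0 : 0 < ε) (hε1 : ε ≤ 1) :
    let ρ : ℝ → ℝ := fun η => 1 / ((π / ε + 1) * (1 + Real.log η ^ (1 + ε)))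
    ∀ a b : ℝ, 1 ≤ a → 1 ≤ b →
      ρ b + (∫ z in (1:ℝ)..a, ρ z / z) + (∫ z in (1:ℝ)..b, ρ z / z) ≤ 1 := by
  intro ρ a b ha hb
  have hC : 0 < π / ε + 1 := by positivity
  have hρ : ∀ z, ρ z = (π / ε + 1)⁻¹ * (1 / (1 + log z ^ (1 + ε))) := fun z => by
    simp only [ρ, one_div, mul_inv]
  have hρb : ρ b ≤ (π / ε + 1)⁻¹ := by
    rw [hρ]
    have := rpow_nonneg (log_nonneg hb) (1 + ε)
    exact mul_le_of_le_one_right (by positivity) ((div_le_one (by positivity)).2 (by linarith))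
  have hintegral : ∀ x, 1 ≤ x → ∫ z in (1:ℝ)..x, ρ z / z ≤ (π / ε + 1)⁻¹ * (π / (2 * ε)) := by
    intro x hx
    simp_rw [hρ, mul_div_assoc]
    have hlog : 0 ≤ log x := log_nonneg hx
    rw [intervalIntegral.integral_const_mul, integral_comp_log_div
      (f := fun t => 1 / (1 + t ^ (1 + ε))) one_pos (by linarith) ?_, log_one]
    · exact mul_le_mul_of_nonneg_left (integral_one_div_one_add_rpow_le hε0 hε1 hlog)
        (by positivity)
    · rw [log_one, uIcc_of_le hlog]
      exact (continuousOn_one_div_one_add_rpow (by linarith)).mono Icc_subset_Ici_self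
  calc ρ b + (∫ z in (1:ℝ)..a, ρ z / z) + (∫ z in (1:ℝ)..b, ρ z / z)
      ≤ (π / ε + 1)⁻¹ + (π / ε + 1)⁻¹ * (π / (2 * ε)) + (π / ε + 1)⁻¹ * (π / (2 * ε)) := by
        gcongr <;> exact hintegral _ ‹_›
    _ = 1 := by field_simp; ring
end
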